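/- arXiv:1803.06692 — 3 statements merged into one kernel-verified Lean document; each statement's English description precedes it below -/
import Mathlib

section
/- Let m ≥ 1 and let (a_n) be a bounded sequence of complex numbers such that ∑_{n≥0} C(m+n−1, m−1) |(𝔡₁^m a)_n| < ∞, where 𝔡₁ is the forward difference operator. Then (a_n) converges. -/
/-- The forward discrete derivative `(𝔡₁ a) n = a n - a (n+1)`. -/
def d1 (a : ℕ → ℂ) : ℕ → ℂ := fun n => a n - a (n + 1)

open Filter Finset

private lemma iter_bound (a : ℕ → ℂ) (M : ℝ) (hbd : ∀ n, ‖a n‖ ≤ M) (j : ℕ) :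
    ∀ n, ‖d1^[j] a n‖ ≤ 2 ^ j * M := by
  induction j with
  | zero => simpa using hbd
  | succ j ih =>
    intro n
    rw [Function.iterate_succ_apply']
    calc ‖d1 (d1^[j] a) n‖ ≤ ‖d1^[j] a n‖ + ‖d1^[j] a (n+1)‖ := norm_sub_le _ _
    _ ≤ 2^j * M + 2^j * M := add_le_add (ih n) (ih (n+1))
    _ = 2^(j+1) * M := by ring

private lemma conv_of_summable (a : ℕ → ℂ) (h : Summable fun n => ‖d1 a n‖) :
    ∃ l : ℂ, Tendsto a atTop (nhds l) := by
  have hs : Summable (d1 a) := h.of_norm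
  refine ⟨a 0 - ∑' n, d1 a n, ?_⟩
  have := hs.hasSum.tendsto_sum_nat
  have h2 : Tendsto (fun n => a 0 - ∑ i ∈ range n, d1 a i) atTop
      (nhds (a 0 - ∑' n, d1 a n)) := tendsto_const_nhds.sub this
  convert h2 using 2 with n
  have : ∑ i ∈ range n, d1 a i = a 0 - a n := Finset.sum_range_sub' a n
  rw [this]; ring

private lemma lim_zero (b c : ℕ → ℂ) (B : ℝ) (hb : ∀ n, ‖b n‖ ≤ B)
    (hc : ∀ n, c n = b n - b (n + 1)) (L : ℂ) (hL : Tendsto c atTop (nhds L)) : L = 0 := by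
  by_contra hL0
  have hLpos : 0 < ‖L‖ := norm_pos_iff.2 hL0
  obtain ⟨N, hN⟩ := (Metric.tendsto_atTop.1 hL) (‖L‖/2) (by linarith)
  obtain ⟨k, hk⟩ := exists_nat_gt (2 * B / (‖L‖/2))
  have hk2 : 2 * B < k * (‖L‖/2) := by
    rw [div_lt_iff₀ (by linarith)] at hk; linarith
  have key : b N - b (N + k) = ∑ i ∈ range k, c (N + i) := by
    have := Finset.sum_range_sub' (fun i => b (N + i)) k
    simp only [hc]
    simpa [Nat.add_assoc] using this.symm
  have h1 : ‖∑ i ∈ range k, c (N + i)‖ ≤ 2 * B := by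
    rw [← key]
    calc ‖b N - b (N+k)‖ ≤ ‖b N‖ + ‖b (N+k)‖ := norm_sub_le _ _
    _ ≤ 2 * B := by have := hb N; have := hb (N+k); linarith
  set S := ∑ i ∈ range k, (c (N + i) - L) with hS
  have e : ∑ i ∈ range k, c (N + i) = (k:ℂ) * L + S := by
    rw [hS, Finset.sum_sub_distrib]; simp [mul_comm]
  have hn : ‖S‖ ≤ k * (‖L‖/2) := by
    calc ‖S‖ ≤ ∑ i ∈ range k, ‖c (N + i) - L‖ := norm_sum_le _ _
    _ ≤ ∑ _i ∈ range k, (‖L‖/2) := by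
        refine Finset.sum_le_sum fun i _ => ?_
        have := hN (N + i) (Nat.le_add_right _ _)
        rw [dist_eq_norm] at this; linarith
    _ = k * (‖L‖/2) := by simp [mul_comm]
  have hkL : ‖(k:ℂ) * L‖ = k * ‖L‖ := by simp
  have h4 : ‖(k:ℂ)*L‖ ≤ ‖(k:ℂ)*L + S‖ + ‖S‖ := by
    calc ‖(k:ℂ)*L‖ = ‖((k:ℂ)*L + S) - S‖ := by ring_nf
    _ ≤ ‖(k:ℂ)*L + S‖ + ‖S‖ := norm_sub_le _ _
  rw [e] at h1
  rw [hkL] at h4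
  linarith

private lemma tail_bound (c : ℕ → ℂ) (h0 : Tendsto c atTop (nhds 0))
    (hs : Summable fun n => ‖d1 c n‖) (n : ℕ) : ‖c n‖ ≤ ∑' j, ‖d1 c (n + j)‖ := by
  have hsn : Summable fun j => ‖d1 c (n + j)‖ := by
    have := (summable_nat_add_iff (f := fun k => ‖d1 c k‖) n).2 hs
    simpa [Nat.add_comm] using this
  have key : ∀ N, ‖c n - c (n + N)‖ ≤ ∑' j, ‖d1 c (n + j)‖ := by
    intro N
    have e : c n - c (n + N) = ∑ i ∈ range N, d1 c (n + i) := by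
      have := Finset.sum_range_sub' (fun i => c (n + i)) N
      simp only [d1]
      simpa [Nat.add_assoc] using this.symm
    rw [e]
    calc ‖∑ i ∈ range N, d1 c (n + i)‖ ≤ ∑ i ∈ range N, ‖d1 c (n + i)‖ := norm_sum_le _ _
    _ ≤ ∑' j, ‖d1 c (n + j)‖ := Summable.sum_le_tsum _ (fun i _ => norm_nonneg _) hsn
  have hlim : Tendsto (fun N => ‖c n - c (n + N)‖) atTop (nhds ‖c n‖) := by
    have h1 : Tendsto (fun N => c (n + N)) atTop (nhds 0) := by
      simpa [Nat.add_comm, Function.comp_def] using h0.comp (tendsto_add_atTop_nat n)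
    have := (tendsto_const_nhds (x := c n)).sub h1
    simpa using this.norm
  exact le_of_tendsto hlim (Filter.Eventually.of_forall key)

private lemma hockey (r k : ℕ) :
    ∑ n ∈ range (k + 1), ((r + n).choose r : ℝ) = ((r + k + 1).choose (r + 1) : ℝ) := by
  induction k with
  | zero => simp
  | succ k ih =>
    rw [Finset.sum_range_succ, ih]
    have : (r + (k+1) + 1).choose (r + 1) = (r + k + 1).choose r + (r + k + 1).choose (r + 1) := by
      have := Nat.choose_succ_succ' (r + k + 1) r
      simpa [Nat.add_assoc, Nat.add_comm, Nat.add_left_comm] using this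
    rw [this, show r + (k+1) = r + k + 1 by omega]
    push_cast
    ring

private lemma hockey' (m : ℕ) (hm : 1 ≤ m) (k : ℕ) :
    ∑ n ∈ range (k + 1), ((m + n - 1).choose (m - 1) : ℝ) = ((m + k).choose m : ℝ) := by
  obtain ⟨r, rfl⟩ : ∃ r, m = r + 1 := ⟨m - 1, by omega⟩
  have : ∀ n, r + 1 + n - 1 = r + n := fun n => by omega
  simp_rw [this, Nat.add_succ_sub_one, show r + 1 + k = r + k + 1 by omega]
  exact hockey r k

private lemma double_sum (m : ℕ) (hm : 1 ≤ m) (g : ℕ → ℝ) (hg : ∀ k, 0 ≤ g k)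
    (hs : Summable fun k => ((m + k).choose m : ℝ) * g k) :
    Summable fun n => ((m + n - 1).choose (m - 1) : ℝ) * ∑' j, g (n + j) := by
  set G : ℕ × ℕ → ℝ := fun p => if p.2 ≤ p.1 then ((m + p.2 - 1).choose (m - 1) : ℝ) * g p.1 else 0
    with hG
  have hGnn : 0 ≤ G := by
    intro p; simp only [hG]; split
    · exact mul_nonneg (by positivity) (hg _)
    · exact le_rfl
  have hfib : ∀ k, (∑' n, G (k, n)) = ((m + k).choose m : ℝ) * g k := by
    intro k
    rw [tsum_eq_sum (s := Finset.range (k+1)) (by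
      intro n hn; simp only [hG]; rw [if_neg]; simpa using hn)]
    have : ∀ n ∈ range (k+1), G (k, n) = ((m + n - 1).choose (m - 1) : ℝ) * g k := by
      intro n hn; simp only [hG]; rw [if_pos]; simpa using Nat.lt_succ_iff.mp (mem_range.mp hn)
    rw [Finset.sum_congr rfl this, ← Finset.sum_mul, hockey' m hm k]
  have hGsum : Summable G := by
    refine (summable_prod_of_nonneg hGnn).2 ⟨?_, ?_⟩
    · intro k
      apply summable_of_ne_finset_zero (s := Finset.range (k+1))
      intro n hn; simp only [hG]; rw [if_neg]; simpa using hn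
    · simpa [hfib] using hs
  have hinj : Function.Injective (fun p : ℕ × ℕ => ((p.1 + p.2, p.1) : ℕ × ℕ)) := by
    intro p q h
    simp only [Prod.mk.injEq] at h
    obtain ⟨h1, h2⟩ := h
    exact Prod.ext h2 (by omega)
  have hcomp : Summable (G ∘ fun p : ℕ × ℕ => ((p.1 + p.2, p.1) : ℕ × ℕ)) :=
    hGsum.comp_injective hinj
  have hF : ∀ n j, G (n + j, n) = ((m + n - 1).choose (m - 1) : ℝ) * g (n + j) := by
    intro n j; simp only [hG]; rw [if_pos (Nat.le_add_right _ _)]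
  have hsum2 := (summable_prod_of_nonneg (f := G ∘ fun p : ℕ × ℕ => ((p.1 + p.2, p.1) : ℕ × ℕ))
    (fun p => hGnn (p.1 + p.2, p.1))).1 hcomp
  have := hsum2.2
  simp only [Function.comp] at this
  convert this using 2 with n
  rw [show (∑' j, G (n + j, n)) = ∑' j, ((m + n - 1).choose (m - 1) : ℝ) * g (n + j) from
    tsum_congr fun j => (hF n j)]
  rw [tsum_mul_left]

private lemma key_lemma (m : ℕ) (hm : 1 ≤ m) : ∀ (a : ℕ → ℂ) (M : ℝ), (∀ n, ‖a n‖ ≤ M) →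
    Summable (fun n => ((m + n - 1).choose (m - 1) : ℝ) * ‖d1^[m] a n‖) →
    Summable fun n => ‖d1 a n‖ := by
  induction m, hm using Nat.le_induction with
  | base => intro a M hbd hs; simpa using hs
  | succ m hm ih =>
    intro a M hbd hs
    set c := d1^[m] a with hcdef
    have hEq : d1^[m+1] a = d1 c := Function.iterate_succ_apply' d1 m a
    have hs' : Summable fun n => ((m + n).choose m : ℝ) * ‖d1 c n‖ := by
      rw [hEq] at hs
      simpa [show ∀ n, m + 1 + n - 1 = m + n from fun n => by omega] using hs
    have hnorm : Summable fun n => ‖d1 c n‖ := by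
      refine Summable.of_nonneg_of_le (fun n => norm_nonneg _) (fun n => ?_) hs'
      have h1 : (1 : ℝ) ≤ ((m + n).choose m : ℝ) := by
        exact_mod_cast Nat.succ_le_of_lt (Nat.choose_pos (Nat.le_add_right m n))
      nlinarith [norm_nonneg (d1 c n)]
    obtain ⟨L, hLt⟩ := conv_of_summable c hnorm
    have hb : ∀ n, c n = d1^[m-1] a n - d1^[m-1] a (n+1) := by
      intro n
      have h2 : d1^[(m-1)+1] a = d1 (d1^[m-1] a) := Function.iterate_succ_apply' d1 (m-1) a
      rw [show m - 1 + 1 = m from by omega] at h2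
      rw [hcdef, h2]; rfl
    have hL0 : L = 0 := lim_zero (d1^[m-1] a) c (2^(m-1) * M) (iter_bound a M hbd (m-1)) hb L hLt
    rw [hL0] at hLt
    have htail : ∀ n, ‖c n‖ ≤ ∑' j, ‖d1 c (n + j)‖ := tail_bound c hLt hnorm
    have hds := double_sum m hm (fun k => ‖d1 c k‖) (fun k => norm_nonneg _) hs'
    have hfin : Summable fun n => ((m + n - 1).choose (m - 1) : ℝ) * ‖c n‖ := by
      refine Summable.of_nonneg_of_le (fun n => by positivity) (fun n => ?_) hds
      exact mul_le_mul_of_nonneg_left (htail n) (by positivity)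
    exact ih a M hbd hfin

/-- If `(a n)` is bounded and `∑ C(m+n-1, m-1) |(𝔡₁^m a) n| < ∞` for some `m ≥ 1`,
then `(a n)` converges. -/
theorem stmt_2 (m : ℕ) (hm : 1 ≤ m) (a : ℕ → ℂ) (M : ℝ) (hbd : ∀ n, ‖a n‖ ≤ M)
    (hsum : Summable (fun n => ((m + n - 1).choose (m - 1) : ℝ) * ‖d1^[m] a n‖)) :
    ∃ l : ℂ, Filter.Tendsto a Filter.atTop (nhds l) := by
  exact conv_of_summable a (key_lemma m hm a M hbd hsum)
end

section
/- Let X be a nonempty set and φ : X × X → ℂ. Suppose there exist a Hilbert space H and bounded functions P, Q : X → H with φ(x,y) = ⟨P(x), Q(y)⟩ for all x, y. Then the map T ↦ (φ(x,y) T_{x,y}) on matrix coefficients defines a bounded operator on B(ℓ²(X)) of norm at most (sup_x ‖P(x)‖)(sup_y ‖Q(y)‖). -/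
noncomputable section SchurAux

open scoped ComplexConjugate ENNReal

namespace SchurAux

local notation "⟪" x ", " y "⟫" => (inner ℂ x y : ℂ)

variable {X : Type}

private lemma rpow_toReal_two (x : ℝ) : x ^ (2 : ℝ≥0∞).toReal = x ^ 2 := by
  rw [show (2 : ℝ≥0∞).toReal = ((2 : ℕ) : ℝ) by norm_num, Real.rpow_natCast]

private lemma two_toReal_pos : 0 < (2 : ℝ≥0∞).toReal := by norm_num

lemma summable_norm_sq (f : lp (fun _ : X => ℂ) 2) :
    Summable (fun x => ‖f x‖ ^ 2) := by
  simpa [rpow_toReal_two] using (lp.memℓp f).summable two_toReal_pos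

lemma norm_sq_eq_tsum (f : lp (fun _ : X => ℂ) 2) :
    ‖f‖ ^ 2 = ∑' x, ‖f x‖ ^ 2 := by
  simpa [rpow_toReal_two] using lp.norm_rpow_eq_tsum two_toReal_pos f

variable {C : ℝ}

lemma summable_pmul_aux (a : X → ℂ) (ha : ∀ x, ‖a x‖ ≤ C) (f : lp (fun _ : X => ℂ) 2) :
    Summable fun x => ‖a x * f x‖ ^ 2 := by
  refine Summable.of_nonneg_of_le (fun x => by positivity) (fun x => ?_)
    ((summable_norm_sq f).mul_left (C ^ 2))
  rw [norm_mul, mul_pow]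
  exact mul_le_mul_of_nonneg_right
    (pow_le_pow_left₀ (norm_nonneg _) (ha x) 2) (by positivity)

/-- Pointwise multiplication of an `ℓ²` function by a bounded function. -/
def pmul (a : X → ℂ) (ha : ∀ x, ‖a x‖ ≤ C) (f : lp (fun _ : X => ℂ) 2) :
    lp (fun _ : X => ℂ) 2 :=
  ⟨fun x => a x * f x, memℓp_gen (by simpa [rpow_toReal_two] using summable_pmul_aux a ha f)⟩

@[simp] lemma pmul_apply (a : X → ℂ) (ha : ∀ x, ‖a x‖ ≤ C) (f : lp (fun _ : X => ℂ) 2)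
    (x : X) : (pmul a ha f) x = a x * f x := rfl

lemma pmul_add (a : X → ℂ) (ha : ∀ x, ‖a x‖ ≤ C) (f g : lp (fun _ : X => ℂ) 2) :
    pmul a ha (f + g) = pmul a ha f + pmul a ha g := by
  refine lp.ext (funext fun x => ?_)
  simp [mul_add]

lemma pmul_smul (a : X → ℂ) (ha : ∀ x, ‖a x‖ ≤ C) (c : ℂ) (f : lp (fun _ : X => ℂ) 2) :
    pmul a ha (c • f) = c • pmul a ha f := by
  refine lp.ext (funext fun x => ?_)
  simp [smul_eq_mul]
  ring

lemma norm_pmul_sq (a : X → ℂ) (ha : ∀ x, ‖a x‖ ≤ C) (f : lp (fun _ : X => ℂ) 2) :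
    ‖pmul a ha f‖ ^ 2 = ∑' x, ‖a x * f x‖ ^ 2 :=
  norm_sq_eq_tsum (pmul a ha f)

lemma pmul_single [DecidableEq X] (a : X → ℂ) (ha : ∀ x, ‖a x‖ ≤ C) (x : X) (c : ℂ) :
    pmul a ha (lp.single 2 x c) = lp.single 2 x (a x * c) := by
  refine lp.ext (funext fun z => ?_)
  by_cases h : z = x
  · subst h
    rw [pmul_apply, lp.single_apply_self, lp.single_apply_self]
  · rw [pmul_apply, lp.single_apply_ne _ _ _ h, lp.single_apply_ne _ _ _ h, mul_zero]

section Main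

variable {I : Type}

/-- Key square-sum estimate coming from the Bessel-type hypothesis. -/
lemma sum_sq_pmul_le (a : I → X → ℂ) (ha : ∀ i x, ‖a i x‖ ≤ C)
    (hB : ∀ (x : X) (s : Finset I), ∑ i ∈ s, ‖a i x‖ ^ 2 ≤ C ^ 2)
    (f : lp (fun _ : X => ℂ) 2) (s : Finset I) :
    ∑ i ∈ s, ‖pmul (a i) (ha i) f‖ ^ 2 ≤ (C * ‖f‖) ^ 2 := by
  have h1 : ∀ i ∈ s, Summable fun x => ‖a i x * f x‖ ^ 2 := fun i _ =>
    summable_pmul_aux _ (ha i) f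
  calc ∑ i ∈ s, ‖pmul (a i) (ha i) f‖ ^ 2
      = ∑ i ∈ s, ∑' x, ‖a i x * f x‖ ^ 2 :=
        Finset.sum_congr rfl fun i _ => norm_pmul_sq _ _ _
    _ = ∑' x, ∑ i ∈ s, ‖a i x * f x‖ ^ 2 := (Summable.tsum_finsetSum h1).symm
    _ ≤ ∑' x, C ^ 2 * ‖f x‖ ^ 2 := by
        refine Summable.tsum_le_tsum (fun x => ?_) (summable_sum h1)
          ((summable_norm_sq f).mul_left _)
        have h2 : ∑ i ∈ s, ‖a i x * f x‖ ^ 2 = (∑ i ∈ s, ‖a i x‖ ^ 2) * ‖f x‖ ^ 2 := by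
          rw [Finset.sum_mul]
          exact Finset.sum_congr rfl fun i _ => by rw [norm_mul, mul_pow]
        rw [h2]
        exact mul_le_mul_of_nonneg_right (hB x s) (by positivity)
    _ = C ^ 2 * ∑' x, ‖f x‖ ^ 2 := tsum_mul_left
    _ = (C * ‖f‖) ^ 2 := by rw [← norm_sq_eq_tsum]; ring

variable {Cp Cq : ℝ}

lemma master (aP aQ : I → X → ℂ)
    (haP : ∀ i x, ‖aP i x‖ ≤ Cp) (haQ : ∀ i x, ‖aQ i x‖ ≤ Cq)
    (hBp : ∀ (x : X) (s : Finset I), ∑ i ∈ s, ‖aP i x‖ ^ 2 ≤ Cp ^ 2)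
    (hBq : ∀ (x : X) (s : Finset I), ∑ i ∈ s, ‖aQ i x‖ ^ 2 ≤ Cq ^ 2)
    (hCp : 0 ≤ Cp) (hCq : 0 ≤ Cq)
    (T : lp (fun _ : X => ℂ) 2 →L[ℂ] lp (fun _ : X => ℂ) 2)
    (f g : lp (fun _ : X => ℂ) 2) :
    Summable (fun i => ⟪T (pmul (aQ i) (haQ i) g), pmul (aP i) (haP i) f⟫) ∧
    ‖∑' i, ⟪T (pmul (aQ i) (haQ i) g), pmul (aP i) (haP i) f⟫‖
      ≤ Cp * Cq * ‖T‖ * ‖f‖ * ‖g‖ := by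
  set u : I → ℝ := fun i => ‖pmul (aP i) (haP i) f‖ with hu_def
  set v : I → ℝ := fun i => ‖pmul (aQ i) (haQ i) g‖ with hv_def
  have hterm : ∀ i, ‖⟪T (pmul (aQ i) (haQ i) g), pmul (aP i) (haP i) f⟫‖
      ≤ (‖T‖ * v i) * u i := by
    intro i
    refine (norm_inner_le_norm _ _).trans ?_
    exact mul_le_mul_of_nonneg_right (T.le_opNorm _) (norm_nonneg _)
  have hsum_bound : ∀ s : Finset I,
      ∑ i ∈ s, ‖⟪T (pmul (aQ i) (haQ i) g), pmul (aP i) (haP i) f⟫‖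
        ≤ Cp * Cq * ‖T‖ * ‖f‖ * ‖g‖ := by
    intro s
    have hu := sum_sq_pmul_le aP haP hBp f s
    have hv := sum_sq_pmul_le aQ haQ hBq g s
    have hcs := Finset.sum_mul_sq_le_sq_mul_sq s u v
    have huv : ∑ i ∈ s, u i * v i ≤ (Cp * ‖f‖) * (Cq * ‖g‖) := by
      have h2 : (∑ i ∈ s, u i * v i) ^ 2 ≤ ((Cp * ‖f‖) * (Cq * ‖g‖)) ^ 2 := by
        calc (∑ i ∈ s, u i * v i) ^ 2
            ≤ (∑ i ∈ s, u i ^ 2) * ∑ i ∈ s, v i ^ 2 := hcs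
          _ ≤ (Cp * ‖f‖) ^ 2 * (Cq * ‖g‖) ^ 2 :=
              mul_le_mul hu hv (Finset.sum_nonneg fun i _ => sq_nonneg _)
                (sq_nonneg _)
          _ = ((Cp * ‖f‖) * (Cq * ‖g‖)) ^ 2 := (mul_pow _ _ _).symm
      have h3 : 0 ≤ ∑ i ∈ s, u i * v i :=
        Finset.sum_nonneg fun i _ => mul_nonneg (norm_nonneg _) (norm_nonneg _)
      have h4 : 0 ≤ (Cp * ‖f‖) * (Cq * ‖g‖) := by positivity
      nlinarith [h2, h3, h4]
    calc ∑ i ∈ s, ‖⟪T (pmul (aQ i) (haQ i) g), pmul (aP i) (haP i) f⟫‖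
        ≤ ∑ i ∈ s, (‖T‖ * v i) * u i := Finset.sum_le_sum fun i _ => hterm i
      _ = ‖T‖ * ∑ i ∈ s, u i * v i := by
          rw [Finset.mul_sum]; exact Finset.sum_congr rfl fun i _ => by ring
      _ ≤ ‖T‖ * ((Cp * ‖f‖) * (Cq * ‖g‖)) :=
          mul_le_mul_of_nonneg_left huv (norm_nonneg T)
      _ = Cp * Cq * ‖T‖ * ‖f‖ * ‖g‖ := by ring
  have hsummable_norm :
      Summable (fun i => ‖⟪T (pmul (aQ i) (haQ i) g), pmul (aP i) (haP i) f⟫‖) :=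
    summable_of_sum_le (fun i => norm_nonneg _) hsum_bound
  refine ⟨hsummable_norm.of_norm, ?_⟩
  exact (norm_tsum_le_tsum_norm hsummable_norm).trans
    (Summable.tsum_le_of_sum_le hsummable_norm hsum_bound)

variable [DecidableEq X]

/-- The bounded linear functional `f ↦ ∑' i, ⟪T (Q_i g), P_i f⟫`. -/
def mfun (aP aQ : I → X → ℂ)
    (haP : ∀ i x, ‖aP i x‖ ≤ Cp) (haQ : ∀ i x, ‖aQ i x‖ ≤ Cq)
    (hBp : ∀ (x : X) (s : Finset I), ∑ i ∈ s, ‖aP i x‖ ^ 2 ≤ Cp ^ 2)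
    (hBq : ∀ (x : X) (s : Finset I), ∑ i ∈ s, ‖aQ i x‖ ^ 2 ≤ Cq ^ 2)
    (hCp : 0 ≤ Cp) (hCq : 0 ≤ Cq)
    (T : lp (fun _ : X => ℂ) 2 →L[ℂ] lp (fun _ : X => ℂ) 2)
    (g : lp (fun _ : X => ℂ) 2) :
    lp (fun _ : X => ℂ) 2 →L[ℂ] ℂ :=
  LinearMap.mkContinuous
    { toFun := fun f => ∑' i, ⟪T (pmul (aQ i) (haQ i) g), pmul (aP i) (haP i) f⟫
      map_add' := fun f f' => by
        have h1 := (master aP aQ haP haQ hBp hBq hCp hCq T f g).1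
        have h2 := (master aP aQ haP haQ hBp hBq hCp hCq T f' g).1
        rw [← Summable.tsum_add h1 h2]
        exact tsum_congr fun i => by rw [pmul_add, inner_add_right]
      map_smul' := fun c f => by
        simp only [RingHom.id_apply, smul_eq_mul]
        rw [← tsum_mul_left]
        exact tsum_congr fun i => by rw [pmul_smul, inner_smul_right] }
    (Cp * Cq * ‖T‖ * ‖g‖)
    (fun f => by
      refine le_of_le_of_eq ((master aP aQ haP haQ hBp hBq hCp hCq T f g).2) (by ring))

lemma mfun_apply (aP aQ : I → X → ℂ)
    (haP : ∀ i x, ‖aP i x‖ ≤ Cp) (haQ : ∀ i x, ‖aQ i x‖ ≤ Cq)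
    (hBp : ∀ (x : X) (s : Finset I), ∑ i ∈ s, ‖aP i x‖ ^ 2 ≤ Cp ^ 2)
    (hBq : ∀ (x : X) (s : Finset I), ∑ i ∈ s, ‖aQ i x‖ ^ 2 ≤ Cq ^ 2)
    (hCp : 0 ≤ Cp) (hCq : 0 ≤ Cq) (T) (g f : lp (fun _ : X => ℂ) 2) :
    mfun aP aQ haP haQ hBp hBq hCp hCq T g f
      = ∑' i, ⟪T (pmul (aQ i) (haQ i) g), pmul (aP i) (haP i) f⟫ := rfl

/-- The Schur multiplier applied to `T`, at the vector `g`. -/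
def M0 (aP aQ : I → X → ℂ)
    (haP : ∀ i x, ‖aP i x‖ ≤ Cp) (haQ : ∀ i x, ‖aQ i x‖ ≤ Cq)
    (hBp : ∀ (x : X) (s : Finset I), ∑ i ∈ s, ‖aP i x‖ ^ 2 ≤ Cp ^ 2)
    (hBq : ∀ (x : X) (s : Finset I), ∑ i ∈ s, ‖aQ i x‖ ^ 2 ≤ Cq ^ 2)
    (hCp : 0 ≤ Cp) (hCq : 0 ≤ Cq)
    (T : lp (fun _ : X => ℂ) 2 →L[ℂ] lp (fun _ : X => ℂ) 2)
    (g : lp (fun _ : X => ℂ) 2) :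
    lp (fun _ : X => ℂ) 2 :=
  (InnerProductSpace.toDual ℂ (lp (fun _ : X => ℂ) 2)).symm
    (mfun aP aQ haP haQ hBp hBq hCp hCq T g)

lemma M0_inner (aP aQ : I → X → ℂ)
    (haP : ∀ i x, ‖aP i x‖ ≤ Cp) (haQ : ∀ i x, ‖aQ i x‖ ≤ Cq)
    (hBp : ∀ (x : X) (s : Finset I), ∑ i ∈ s, ‖aP i x‖ ^ 2 ≤ Cp ^ 2)
    (hBq : ∀ (x : X) (s : Finset I), ∑ i ∈ s, ‖aQ i x‖ ^ 2 ≤ Cq ^ 2)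
    (hCp : 0 ≤ Cp) (hCq : 0 ≤ Cq) (T) (g f : lp (fun _ : X => ℂ) 2) :
    ⟪M0 aP aQ haP haQ hBp hBq hCp hCq T g, f⟫
      = ∑' i, ⟪T (pmul (aQ i) (haQ i) g), pmul (aP i) (haP i) f⟫ := by
  rw [M0, InnerProductSpace.toDual_symm_apply, mfun_apply]

lemma M0_norm_le (aP aQ : I → X → ℂ)
    (haP : ∀ i x, ‖aP i x‖ ≤ Cp) (haQ : ∀ i x, ‖aQ i x‖ ≤ Cq)
    (hBp : ∀ (x : X) (s : Finset I), ∑ i ∈ s, ‖aP i x‖ ^ 2 ≤ Cp ^ 2)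
    (hBq : ∀ (x : X) (s : Finset I), ∑ i ∈ s, ‖aQ i x‖ ^ 2 ≤ Cq ^ 2)
    (hCp : 0 ≤ Cp) (hCq : 0 ≤ Cq) (T) (g : lp (fun _ : X => ℂ) 2) :
    ‖M0 aP aQ haP haQ hBp hBq hCp hCq T g‖ ≤ Cp * Cq * ‖T‖ * ‖g‖ := by
  set w := M0 aP aQ haP haQ hBp hBq hCp hCq T g with hw
  have h1 : ⟪w, w⟫ = ∑' i, ⟪T (pmul (aQ i) (haQ i) g), pmul (aP i) (haP i) w⟫ :=
    M0_inner aP aQ haP haQ hBp hBq hCp hCq T g w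
  have h2 : ‖w‖ ^ 2 ≤ Cp * Cq * ‖T‖ * ‖w‖ * ‖g‖ := by
    have h3 : ‖(⟪w, w⟫ : ℂ)‖ = ‖w‖ ^ 2 := by
      rw [inner_self_eq_norm_sq_to_K]
      simp [norm_pow]
    rw [← h3, h1]
    exact (master aP aQ haP haQ hBp hBq hCp hCq T w g).2
  rcases eq_or_lt_of_le (norm_nonneg w) with h | h
  · rw [← h]; positivity
  · have h6 : ‖w‖ * ‖w‖ ≤ (Cp * Cq * ‖T‖ * ‖g‖) * ‖w‖ := by nlinarith
    exact le_of_mul_le_mul_right h6 h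

/-- The Schur multiplier applied to `T`, as a bounded operator. -/
def M1 (aP aQ : I → X → ℂ)
    (haP : ∀ i x, ‖aP i x‖ ≤ Cp) (haQ : ∀ i x, ‖aQ i x‖ ≤ Cq)
    (hBp : ∀ (x : X) (s : Finset I), ∑ i ∈ s, ‖aP i x‖ ^ 2 ≤ Cp ^ 2)
    (hBq : ∀ (x : X) (s : Finset I), ∑ i ∈ s, ‖aQ i x‖ ^ 2 ≤ Cq ^ 2)
    (hCp : 0 ≤ Cp) (hCq : 0 ≤ Cq)
    (T : lp (fun _ : X => ℂ) 2 →L[ℂ] lp (fun _ : X => ℂ) 2) :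
    lp (fun _ : X => ℂ) 2 →L[ℂ] lp (fun _ : X => ℂ) 2 :=
  LinearMap.mkContinuous
    { toFun := fun g => M0 aP aQ haP haQ hBp hBq hCp hCq T g
      map_add' := fun g g' => by
        refine ext_inner_right ℂ fun ξ => ?_
        rw [inner_add_left, M0_inner, M0_inner, M0_inner]
        rw [← Summable.tsum_add (master aP aQ haP haQ hBp hBq hCp hCq T ξ g).1
          (master aP aQ haP haQ hBp hBq hCp hCq T ξ g').1]
        exact tsum_congr fun i => by rw [pmul_add, map_add, inner_add_left]
      map_smul' := fun c g => by
        simp only [RingHom.id_apply]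
        refine ext_inner_right ℂ fun ξ => ?_
        rw [inner_smul_left, M0_inner, M0_inner, ← tsum_mul_left]
        exact tsum_congr fun i => by
          rw [pmul_smul, map_smul, inner_smul_left] }
    (Cp * Cq * ‖T‖)
    (fun g => by
      refine le_of_le_of_eq (M0_norm_le aP aQ haP haQ hBp hBq hCp hCq T g) (by ring))

lemma M1_apply (aP aQ : I → X → ℂ)
    (haP : ∀ i x, ‖aP i x‖ ≤ Cp) (haQ : ∀ i x, ‖aQ i x‖ ≤ Cq)
    (hBp : ∀ (x : X) (s : Finset I), ∑ i ∈ s, ‖aP i x‖ ^ 2 ≤ Cp ^ 2)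
    (hBq : ∀ (x : X) (s : Finset I), ∑ i ∈ s, ‖aQ i x‖ ^ 2 ≤ Cq ^ 2)
    (hCp : 0 ≤ Cp) (hCq : 0 ≤ Cq) (T) (g : lp (fun _ : X => ℂ) 2) :
    M1 aP aQ haP haQ hBp hBq hCp hCq T g = M0 aP aQ haP haQ hBp hBq hCp hCq T g := rfl

lemma M1_norm_le (aP aQ : I → X → ℂ)
    (haP : ∀ i x, ‖aP i x‖ ≤ Cp) (haQ : ∀ i x, ‖aQ i x‖ ≤ Cq)
    (hBp : ∀ (x : X) (s : Finset I), ∑ i ∈ s, ‖aP i x‖ ^ 2 ≤ Cp ^ 2)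
    (hBq : ∀ (x : X) (s : Finset I), ∑ i ∈ s, ‖aQ i x‖ ^ 2 ≤ Cq ^ 2)
    (hCp : 0 ≤ Cp) (hCq : 0 ≤ Cq) (T : lp (fun _ : X => ℂ) 2 →L[ℂ] lp (fun _ : X => ℂ) 2) :
    ‖M1 aP aQ haP haQ hBp hBq hCp hCq T‖ ≤ Cp * Cq * ‖T‖ :=
  LinearMap.mkContinuous_norm_le _ (by positivity) _

/-- The Schur multiplier as a bounded operator on operators. -/
def Mfull (aP aQ : I → X → ℂ)
    (haP : ∀ i x, ‖aP i x‖ ≤ Cp) (haQ : ∀ i x, ‖aQ i x‖ ≤ Cq)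
    (hBp : ∀ (x : X) (s : Finset I), ∑ i ∈ s, ‖aP i x‖ ^ 2 ≤ Cp ^ 2)
    (hBq : ∀ (x : X) (s : Finset I), ∑ i ∈ s, ‖aQ i x‖ ^ 2 ≤ Cq ^ 2)
    (hCp : 0 ≤ Cp) (hCq : 0 ≤ Cq) :
    (lp (fun _ : X => ℂ) 2 →L[ℂ] lp (fun _ : X => ℂ) 2) →L[ℂ]
      (lp (fun _ : X => ℂ) 2 →L[ℂ] lp (fun _ : X => ℂ) 2) :=
  LinearMap.mkContinuous
    { toFun := fun T => M1 aP aQ haP haQ hBp hBq hCp hCq T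
      map_add' := fun T T' => by
        refine ContinuousLinearMap.ext fun g => ?_
        refine ext_inner_right ℂ fun ξ => ?_
        rw [ContinuousLinearMap.add_apply, inner_add_left]
        rw [M1_apply, M1_apply, M1_apply, M0_inner, M0_inner, M0_inner]
        rw [← Summable.tsum_add (master aP aQ haP haQ hBp hBq hCp hCq T ξ g).1
          (master aP aQ haP haQ hBp hBq hCp hCq T' ξ g).1]
        exact tsum_congr fun i => by
          rw [ContinuousLinearMap.add_apply, inner_add_left]
      map_smul' := fun c T => by
        simp only [RingHom.id_apply]
        refine ContinuousLinearMap.ext fun g => ?_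
        refine ext_inner_right ℂ fun ξ => ?_
        rw [ContinuousLinearMap.smul_apply, inner_smul_left]
        rw [M1_apply, M1_apply, M0_inner, M0_inner, ← tsum_mul_left]
        exact tsum_congr fun i => by
          rw [ContinuousLinearMap.smul_apply, inner_smul_left] }
    (Cp * Cq)
    (fun T => le_of_le_of_eq
      (M1_norm_le aP aQ haP haQ hBp hBq hCp hCq T) (by ring))

lemma Mfull_norm_le (aP aQ : I → X → ℂ)
    (haP : ∀ i x, ‖aP i x‖ ≤ Cp) (haQ : ∀ i x, ‖aQ i x‖ ≤ Cq)
    (hBp : ∀ (x : X) (s : Finset I), ∑ i ∈ s, ‖aP i x‖ ^ 2 ≤ Cp ^ 2)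
    (hBq : ∀ (x : X) (s : Finset I), ∑ i ∈ s, ‖aQ i x‖ ^ 2 ≤ Cq ^ 2)
    (hCp : 0 ≤ Cp) (hCq : 0 ≤ Cq) :
    ‖Mfull aP aQ haP haQ hBp hBq hCp hCq‖ ≤ Cp * Cq :=
  LinearMap.mkContinuous_norm_le _ (by positivity) _

lemma Mfull_apply (aP aQ : I → X → ℂ)
    (haP : ∀ i x, ‖aP i x‖ ≤ Cp) (haQ : ∀ i x, ‖aQ i x‖ ≤ Cq)
    (hBp : ∀ (x : X) (s : Finset I), ∑ i ∈ s, ‖aP i x‖ ^ 2 ≤ Cp ^ 2)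
    (hBq : ∀ (x : X) (s : Finset I), ∑ i ∈ s, ‖aQ i x‖ ^ 2 ≤ Cq ^ 2)
    (hCp : 0 ≤ Cp) (hCq : 0 ≤ Cq) (T) (g : lp (fun _ : X => ℂ) 2) :
    Mfull aP aQ haP haQ hBp hBq hCp hCq T g = M0 aP aQ haP haQ hBp hBq hCp hCq T g := rfl

lemma Mfull_coeff (aP aQ : I → X → ℂ)
    (haP : ∀ i x, ‖aP i x‖ ≤ Cp) (haQ : ∀ i x, ‖aQ i x‖ ≤ Cq)
    (hBp : ∀ (x : X) (s : Finset I), ∑ i ∈ s, ‖aP i x‖ ^ 2 ≤ Cp ^ 2)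
    (hBq : ∀ (x : X) (s : Finset I), ∑ i ∈ s, ‖aQ i x‖ ^ 2 ≤ Cq ^ 2)
    (hCp : 0 ≤ Cp) (hCq : 0 ≤ Cq) (T) (x y : X) :
    ⟪lp.single 2 x (1 : ℂ), Mfull aP aQ haP haQ hBp hBq hCp hCq T (lp.single 2 y (1 : ℂ))⟫
      = (∑' i, conj (aP i x) * aQ i y)
        * ⟪lp.single 2 x (1 : ℂ), T (lp.single 2 y (1 : ℂ))⟫ := by
  have h1 : ⟪Mfull aP aQ haP haQ hBp hBq hCp hCq T (lp.single 2 y (1 : ℂ)),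
      lp.single 2 x (1 : ℂ)⟫
      = ∑' i, ⟪T (pmul (aQ i) (haQ i) (lp.single 2 y (1 : ℂ))),
          pmul (aP i) (haP i) (lp.single 2 x (1 : ℂ))⟫ := by
    rw [Mfull_apply, M0_inner]
  have h2 : ∀ i, ⟪T (pmul (aQ i) (haQ i) (lp.single 2 y (1 : ℂ))),
      pmul (aP i) (haP i) (lp.single 2 x (1 : ℂ))⟫
      = conj (aQ i y) * conj ((T (lp.single 2 y (1 : ℂ))) x) * aP i x := by
    intro i
    rw [pmul_single, pmul_single, mul_one, mul_one]
    have h3 : lp.single (E := fun _ : X => ℂ) 2 y (aQ i y) = aQ i y • lp.single 2 y (1 : ℂ) := by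
      rw [← lp.single_smul]
      congr 1
      simp [smul_eq_mul]
    rw [h3, map_smul, lp.inner_single_right]
    rw [lp.coeFn_smul, Pi.smul_apply, smul_eq_mul, RCLike.inner_apply, map_mul]
    ring
  have h4 : ⟪lp.single 2 x (1 : ℂ), T (lp.single 2 y (1 : ℂ))⟫
      = (T (lp.single 2 y (1 : ℂ))) x := by
    rw [lp.inner_single_left]
    simp [RCLike.inner_apply]
  rw [← inner_conj_symm, h1, starRingEnd_apply, tsum_star]
  rw [h4, ← tsum_mul_right]
  refine tsum_congr fun i => ?_
  rw [h2 i]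
  simp only [starRingEnd_apply, star_mul', star_star]
  ring

end Main

end SchurAux

end SchurAux

open SchurAux in
/-- Grothendieck's sufficiency: if `φ x y = ⟪P x, Q y⟫` for bounded Hilbert-space-valued
functions `P, Q`, then the Schur multiplication `T ↦ (φ(x,y) T_{x,y})` defines a bounded
linear operator `M` on `B(ℓ²(X))` with `‖M‖ ≤ (sup ‖P‖)(sup ‖Q‖)`.
Here `T_{x,y} = ⟪δ_x, T δ_y⟫` is the matrix coefficient of `T`. -/
theorem stmt_6 (X : Type) [DecidableEq X] [Nonempty X]
    (φ : X → X → ℂ) (H : Type) [NormedAddCommGroup H] [InnerProductSpace ℂ H]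
    (P Q : X → H) (Cp Cq : ℝ)
    (hP : ∀ x, ‖P x‖ ≤ Cp) (hQ : ∀ y, ‖Q y‖ ≤ Cq)
    (hφ : ∀ x y, φ x y = (inner ℂ (P x) (Q y) : ℂ)) :
    ∃ M : (lp (fun _ : X => ℂ) 2 →L[ℂ] lp (fun _ : X => ℂ) 2) →L[ℂ]
        (lp (fun _ : X => ℂ) 2 →L[ℂ] lp (fun _ : X => ℂ) 2),
      ‖M‖ ≤ Cp * Cq ∧
      ∀ (T : lp (fun _ : X => ℂ) 2 →L[ℂ] lp (fun _ : X => ℂ) 2) (x y : X),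
        (inner ℂ (lp.single 2 x (1 : ℂ)) (M T (lp.single 2 y (1 : ℂ))) : ℂ) =
          φ x y * (inner ℂ (lp.single 2 x (1 : ℂ)) (T (lp.single 2 y (1 : ℂ))) : ℂ) := by
  classical
  set K := UniformSpace.Completion H
  obtain ⟨w, b, hb⟩ := exists_hilbertBasis ℂ K
  set aP : w → X → ℂ := fun i x => (inner ℂ (b i) ((P x : K)) : ℂ) with haP_def
  set aQ : w → X → ℂ := fun i y => (inner ℂ (b i) ((Q y : K)) : ℂ) with haQ_def
  obtain ⟨x0⟩ := ‹Nonempty X›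
  have hCp : 0 ≤ Cp := (norm_nonneg (P x0)).trans (hP x0)
  have hCq : 0 ≤ Cq := (norm_nonneg (Q x0)).trans (hQ x0)
  have hnormP : ∀ x, ‖((P x : K))‖ ≤ Cp := fun x => by
    rw [UniformSpace.Completion.norm_coe]; exact hP x
  have hnormQ : ∀ y, ‖((Q y : K))‖ ≤ Cq := fun y => by
    rw [UniformSpace.Completion.norm_coe]; exact hQ y
  have haP : ∀ i x, ‖aP i x‖ ≤ Cp := by
    intro i x
    refine (norm_inner_le_norm _ _).trans ?_
    rw [b.orthonormal.1 i, one_mul]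
    exact hnormP x
  have haQ : ∀ i y, ‖aQ i y‖ ≤ Cq := by
    intro i y
    refine (norm_inner_le_norm _ _).trans ?_
    rw [b.orthonormal.1 i, one_mul]
    exact hnormQ y
  have hBp : ∀ (x : X) (s : Finset w), ∑ i ∈ s, ‖aP i x‖ ^ 2 ≤ Cp ^ 2 := by
    intro x s
    refine (b.orthonormal.sum_inner_products_le ((P x : K))).trans ?_
    exact pow_le_pow_left₀ (norm_nonneg _) (hnormP x) 2
  have hBq : ∀ (y : X) (s : Finset w), ∑ i ∈ s, ‖aQ i y‖ ^ 2 ≤ Cq ^ 2 := by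
    intro y s
    refine (b.orthonormal.sum_inner_products_le ((Q y : K))).trans ?_
    exact pow_le_pow_left₀ (norm_nonneg _) (hnormQ y) 2
  have hrep : ∀ x y, (∑' i, (starRingEnd ℂ) (aP i x) * aQ i y) = φ x y := by
    intro x y
    rw [hφ, ← UniformSpace.Completion.inner_coe (𝕜 := ℂ)]
    rw [← b.tsum_inner_mul_inner ((P x : K)) ((Q y : K))]
    exact tsum_congr fun i => by rw [haP_def, haQ_def, ← inner_conj_symm]
  refine ⟨Mfull aP aQ haP haQ hBp hBq hCp hCq,
    Mfull_norm_le aP aQ haP haQ hBp hBq hCp hCq, fun T x y => ?_⟩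
  rw [Mfull_coeff aP aQ haP haQ hBp hBq hCp hCq T x y, hrep]
end

section
/- Let V₁, V₂ be double commuting isometries on a Hilbert space H (i.e. V₁ commutes with V₂ and with V₂*). Then H decomposes as the orthogonal direct sum of four subspaces H_∅ ⊕ H_{1} ⊕ H_{2} ⊕ H_{12}, where H_∅ = ⋂_{p,q≥0} V₁^p V₂^q H, H_{12} = ⊕_{p,q≥0} V₁^p V₂^q (Ker V₁* ∩ Ker V₂*), H_{1} = ⊕_{p≥0} V₁^p (⋂_{q≥0} V₂^q Ker V₁*), and H_{2} = ⊕_{q≥0} V₂^q (⋂_{p≥0} V₁^p Ker V₂*). -/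
set_option linter.unusedSectionVars false
set_option linter.unusedVariables false
open ContinuousLinearMap Filter Topology

section MonoidAux
variable {M : Type*} [Monoid M] {S T : M}

lemma sloc_pow_cancel (h : T * S = 1) : ∀ p, T ^ p * S ^ p = 1 := by
  intro p; induction p with
  | zero => simp
  | succ n ih => rw [pow_succ, pow_succ', mul_assoc, ← mul_assoc T, h, one_mul, ih]

lemma sloc_pow_le (h : T * S = 1) {m n : ℕ} (hmn : m ≤ n) : T ^ m * S ^ n = S ^ (n - m) := by
  obtain ⟨r, rfl⟩ := Nat.exists_eq_add_of_le hmn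
  have hr : m + r - m = r := by omega
  rw [hr, pow_add, ← mul_assoc, sloc_pow_cancel h, one_mul]

lemma sloc_pow_ge (h : T * S = 1) {m n : ℕ} (hmn : m ≤ n) : T ^ n * S ^ m = T ^ (n - m) := by
  obtain ⟨r, rfl⟩ := Nat.exists_eq_add_of_le hmn
  have hr : m + r - m = r := by omega
  rw [hr, show m + r = r + m from Nat.add_comm m r, pow_add, mul_assoc, sloc_pow_cancel h, mul_one]

end MonoidAux

section HilbertAux
variable {H : Type*} [NormedAddCommGroup H] [InnerProductSpace ℂ H] [CompleteSpace H]

lemma sloc_adj_pow (V : H →L[ℂ] H) (p : ℕ) : adjoint (V ^ p) = (adjoint V) ^ p := by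
  rw [← star_eq_adjoint, ← star_eq_adjoint, star_pow]

lemma sloc_isom (V : H →L[ℂ] H) (h : ∀ x, ‖V x‖ = ‖x‖) : adjoint V * V = 1 :=
  (norm_map_iff_adjoint_comp_self V).mp h

lemma sloc_pow_isom (V : H →L[ℂ] H) (h : ∀ x, ‖V x‖ = ‖x‖) (p : ℕ) (x : H) :
    ‖(V ^ p) x‖ = ‖x‖ := by
  induction p generalizing x with
  | zero => simp
  | succ n ih => rw [pow_succ, ContinuousLinearMap.mul_apply, ih, h]

lemma sloc_adj_contr (V : H →L[ℂ] H) (h : ∀ x, ‖V x‖ = ‖x‖) (z : H) :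
    ‖adjoint V z‖ ≤ ‖z‖ := by
  have h1 : ‖V‖ ≤ 1 :=
    ContinuousLinearMap.opNorm_le_bound _ zero_le_one (fun x => by rw [h, one_mul])
  calc ‖adjoint V z‖ ≤ ‖adjoint V‖ * ‖z‖ := le_opNorm _ _
    _ ≤ ‖z‖ := by
        have h2 : ‖adjoint V‖ = ‖V‖ := LinearIsometryEquiv.norm_map adjoint V
        nlinarith [norm_nonneg z]

lemma sloc_adj_pow_contr (V : H →L[ℂ] H) (h : ∀ x, ‖V x‖ = ‖x‖) (p : ℕ) (x : H) :
    ‖((adjoint V) ^ p) x‖ ≤ ‖x‖ := by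
  induction p with
  | zero => simp
  | succ n ih =>
      rw [pow_succ']
      calc ‖(adjoint V * (adjoint V) ^ n) x‖ = ‖adjoint V (((adjoint V) ^ n) x)‖ := by
            rw [ContinuousLinearMap.mul_apply]
        _ ≤ ‖((adjoint V) ^ n) x‖ := sloc_adj_contr V h _
        _ ≤ ‖x‖ := ih

lemma sloc_E_sa (V : H →L[ℂ] H) (p : ℕ) :
    adjoint (V ^ p * (adjoint V) ^ p) = V ^ p * (adjoint V) ^ p := by
  rw [← star_eq_adjoint, ← star_eq_adjoint, star_mul, star_pow, star_pow, star_star]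

lemma sloc_E_contr (V : H →L[ℂ] H) (h : ∀ x, ‖V x‖ = ‖x‖) (p : ℕ) (x : H) :
    ‖(V ^ p * (adjoint V) ^ p) x‖ ≤ ‖x‖ := by
  rw [ContinuousLinearMap.mul_apply, sloc_pow_isom V h]; exact sloc_adj_pow_contr V h p x

lemma sloc_E_mul (V : H →L[ℂ] H) (hV : adjoint V * V = 1) (m n : ℕ) :
    (V ^ m * (adjoint V) ^ m) * (V ^ n * (adjoint V) ^ n)
      = V ^ (max m n) * (adjoint V) ^ (max m n) := by
  rcases le_total m n with h | h
  · rw [max_eq_right h]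
    calc V ^ m * (adjoint V) ^ m * (V ^ n * (adjoint V) ^ n)
        = V ^ m * (((adjoint V) ^ m * V ^ n) * (adjoint V) ^ n) := by
          rw [mul_assoc, mul_assoc]
      _ = V ^ m * (V ^ (n - m) * (adjoint V) ^ n) := by rw [sloc_pow_le hV h]
      _ = (V ^ m * V ^ (n - m)) * (adjoint V) ^ n := by rw [mul_assoc]
      _ = V ^ n * (adjoint V) ^ n := by rw [← pow_add, Nat.add_sub_cancel' h]
  · rw [max_eq_left h]
    calc V ^ m * (adjoint V) ^ m * (V ^ n * (adjoint V) ^ n)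
        = V ^ m * (((adjoint V) ^ m * V ^ n) * (adjoint V) ^ n) := by
          rw [mul_assoc, mul_assoc]
      _ = V ^ m * ((adjoint V) ^ (m - n) * (adjoint V) ^ n) := by rw [sloc_pow_ge hV h]
      _ = V ^ m * (adjoint V) ^ m := by rw [← pow_add, Nat.sub_add_cancel h]

end HilbertAux

section CrossAux
variable {H : Type*} [NormedAddCommGroup H] [InnerProductSpace ℂ H] [CompleteSpace H]

lemma sloc_EF_comm (V W : H →L[ℂ] H) (cVW : Commute V W) (cVB : Commute V (adjoint W))
    (cAW : Commute (adjoint V) W) (cAB : Commute (adjoint V) (adjoint W)) (p q : ℕ) :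
    Commute (V ^ p * (adjoint V) ^ p) (W ^ q * (adjoint W) ^ q) :=
  (((cVW.pow_pow p q).mul_right (cVB.pow_pow p q)).mul_left
    ((cAW.pow_pow p q).mul_right (cAB.pow_pow p q)))

lemma sloc_T_mul (V W : H →L[ℂ] H) (hV : adjoint V * V = 1) (hW : adjoint W * W = 1)
    (cVW : Commute V W) (cVB : Commute V (adjoint W))
    (cAW : Commute (adjoint V) W) (cAB : Commute (adjoint V) (adjoint W)) (m n : ℕ) :
    ((V ^ m * (adjoint V) ^ m) * (W ^ m * (adjoint W) ^ m))
      * ((V ^ n * (adjoint V) ^ n) * (W ^ n * (adjoint W) ^ n))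
    = (V ^ (max m n) * (adjoint V) ^ (max m n)) * (W ^ (max m n) * (adjoint W) ^ (max m n)) := by
  rw [((sloc_EF_comm V W cVW cVB cAW cAB n m).symm).mul_mul_mul_comm,
    sloc_E_mul V hV, sloc_E_mul W hW]

lemma sloc_T_sa (V W : H →L[ℂ] H)
    (cVW : Commute V W) (cVB : Commute V (adjoint W))
    (cAW : Commute (adjoint V) W) (cAB : Commute (adjoint V) (adjoint W)) (n : ℕ) :
    adjoint ((V ^ n * (adjoint V) ^ n) * (W ^ n * (adjoint W) ^ n))
      = (V ^ n * (adjoint V) ^ n) * (W ^ n * (adjoint W) ^ n) := by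
  rw [← star_eq_adjoint, star_mul]
  rw [show star (W ^ n * (adjoint W) ^ n) = adjoint (W ^ n * (adjoint W) ^ n) from rfl]
  rw [show star (V ^ n * (adjoint V) ^ n) = adjoint (V ^ n * (adjoint V) ^ n) from rfl]
  rw [sloc_E_sa, sloc_E_sa, ((sloc_EF_comm V W cVW cVB cAW cAB n n).symm).eq]

lemma sloc_T_contr (V W : H →L[ℂ] H) (h1 : ∀ x, ‖V x‖ = ‖x‖) (h2 : ∀ x, ‖W x‖ = ‖x‖)
    (n : ℕ) (x : H) :
    ‖((V ^ n * (adjoint V) ^ n) * (W ^ n * (adjoint W) ^ n)) x‖ ≤ ‖x‖ := by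
  rw [ContinuousLinearMap.mul_apply]
  exact (sloc_E_contr V h1 n _).trans (sloc_E_contr W h2 n x)

lemma sloc_T_absorb (V W : H →L[ℂ] H) (hV : adjoint V * V = 1) (hW : adjoint W * W = 1)
    (cVW : Commute V W) (cVB : Commute V (adjoint W))
    (cAW : Commute (adjoint V) W) (cAB : Commute (adjoint V) (adjoint W))
    {p q n : ℕ} (hp : p ≤ n) (hq : q ≤ n) :
    ((V ^ p * (adjoint V) ^ p) * (W ^ q * (adjoint W) ^ q))
      * ((V ^ n * (adjoint V) ^ n) * (W ^ n * (adjoint W) ^ n))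
    = (V ^ n * (adjoint V) ^ n) * (W ^ n * (adjoint W) ^ n) := by
  rw [((sloc_EF_comm V W cVW cVB cAW cAB n q).symm).mul_mul_mul_comm,
    sloc_E_mul V hV, sloc_E_mul W hW, max_eq_right hp, max_eq_right hq]

lemma sloc_EF_factor (V W : H →L[ℂ] H)
    (cAW : Commute (adjoint V) W) (p q : ℕ) :
    (V ^ p * W ^ q) * ((adjoint V) ^ p * (adjoint W) ^ q)
      = (V ^ p * (adjoint V) ^ p) * (W ^ q * (adjoint W) ^ q) := by
  rw [((cAW.pow_pow p q).symm).mul_mul_mul_comm]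

end CrossAux

section MainAux
variable {H : Type*} [NormedAddCommGroup H] [InnerProductSpace ℂ H] [CompleteSpace H]

lemma proj_tendsto (T : ℕ → H →L[ℂ] H)
    (hmul : ∀ m n, T m * T n = T (max m n))
    (hsa : ∀ n, adjoint (T n) = T n)
    (hco : ∀ n y, ‖T n y‖ ≤ ‖y‖) (x : H) :
    ∃ y, Tendsto (fun n => T n x) atTop (𝓝 y) := by
  have key : ∀ m n, m ≤ n → ‖T n x‖ ≤ ‖T m x‖ := by
    intro m n h
    have h2 : T n x = T n (T m x) := by
      rw [← ContinuousLinearMap.mul_apply, hmul, max_eq_left h]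
    rw [h2]; exact hco n _
  set a : ℕ → ℝ := fun n => ‖T n x‖ ^ 2 with ha
  have hanti : Antitone a := fun m n h => by
    dsimp [a]; exact pow_le_pow_left₀ (norm_nonneg _) (key m n h) 2
  have hbdd : BddBelow (Set.range a) := ⟨0, by rintro _ ⟨n, rfl⟩; positivity⟩
  have hacauchy : CauchySeq a := (tendsto_atTop_ciInf hanti hbdd).cauchySeq
  have hinner : ∀ m n, m ≤ n → RCLike.re (inner ℂ (T m x) (T n x) : ℂ) = a n := by
    intro m n h
    have e1 : (inner ℂ (T m x) (T n x) : ℂ) = inner ℂ (T n (T m x)) x := by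
      rw [← adjoint_inner_right (T n), hsa]
    have e2 : T n (T m x) = T n x := by
      rw [← ContinuousLinearMap.mul_apply, hmul, max_eq_left h]
    have e3 : (inner ℂ (T n x) x : ℂ) = inner ℂ (T n x) (T n x) :=
      calc (inner ℂ (T n x) x : ℂ) = inner ℂ ((adjoint (T n)) (T n x)) x := by
            rw [hsa, ← ContinuousLinearMap.mul_apply, hmul, max_self]
        _ = inner ℂ (T n x) (T n x) := adjoint_inner_left _ _ _
    rw [e1, e2, e3, inner_self_eq_norm_sq]
  have hdist : ∀ m n, m ≤ n → ‖T m x - T n x‖ ^ 2 = a m - a n := by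
    intro m n h
    rw [@norm_sub_sq ℂ, hinner m n h]
    simp only [ha]; ring
  have hcs : CauchySeq (fun n => T n x) := by
    rw [Metric.cauchySeq_iff]
    intro ε hε
    rw [Metric.cauchySeq_iff] at hacauchy
    obtain ⟨N, hN⟩ := hacauchy (ε ^ 2) (by positivity)
    refine ⟨N, fun m hm n hn => ?_⟩
    have main : ∀ m n, N ≤ m → N ≤ n → m ≤ n → dist (T m x) (T n x) < ε := by
      intro m n hm hn hmn
      have h1 := hN m hm n hn
      rw [Real.dist_eq] at h1
      have h2 : ‖T m x - T n x‖ ^ 2 < ε ^ 2 := by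
        rw [hdist m n hmn]
        calc a m - a n ≤ |a m - a n| := le_abs_self _
          _ < ε ^ 2 := h1
      rw [dist_eq_norm]
      exact lt_of_pow_lt_pow_left₀ 2 (le_of_lt hε) h2
    rcases le_total m n with h | h
    · exact main m n hm hn h
    · rw [dist_comm]; exact main n m hn hm h
  exact cauchySeq_tendsto_of_complete hcs


lemma sloc_D_eq (V : H →L[ℂ] H) (p : ℕ) :
    V ^ p * (adjoint V) ^ p - V ^ (p+1) * (adjoint V) ^ (p+1)
      = V ^ p * ((1 - V * adjoint V) * (adjoint V) ^ p) := by
  rw [sub_mul, one_mul, mul_sub]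
  congr 1
  rw [pow_succ V p, pow_succ' (adjoint V) p]
  simp only [mul_assoc]

lemma sloc_ann (V : H →L[ℂ] H) (hV : adjoint V * V = 1) :
    adjoint V * (1 - V * adjoint V) = 0 := by
  rw [mul_sub, mul_one, ← mul_assoc, hV, one_mul, sub_self]

lemma sloc_D_mem (V W : H →L[ℂ] H) (hV : adjoint V * V = 1)
    (cVW : Commute V W) (cVB : Commute V (adjoint W))
    (cAW : Commute (adjoint V) W) (cAB : Commute (adjoint V) (adjoint W))
    (f : H) (hf : ∀ q : ℕ, (W ^ q * (adjoint W) ^ q) f = f) (p : ℕ) :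
    (V ^ p * (adjoint V) ^ p) f - (V ^ (p+1) * (adjoint V) ^ (p+1)) f
      ∈ (⨅ q : ℕ, (LinearMap.ker ((adjoint V : H →L[ℂ] H) : H →ₗ[ℂ] H)).map ((W ^ q : H →L[ℂ] H) : H →ₗ[ℂ] H)).map
          ((V ^ p : H →L[ℂ] H) : H →ₗ[ℂ] H) := by
  have cRW : Commute (1 - V * adjoint V) W := (Commute.one_left W).sub_left (cVW.mul_left cAW)
  have cRB : Commute (1 - V * adjoint V) (adjoint W) :=
    (Commute.one_left _).sub_left (cVB.mul_left cAB)
  refine Submodule.mem_map.mpr ⟨((1 - V * adjoint V) * (adjoint V) ^ p) f, ?_, ?_⟩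
  · rw [Submodule.mem_iInf]
    intro q
    refine Submodule.mem_map.mpr
      ⟨((1 - V * adjoint V) * (adjoint V) ^ p) (((adjoint W) ^ q) f), ?_, ?_⟩
    · rw [LinearMap.mem_ker]
      have h2 : adjoint V ((((1 - V * adjoint V) * (adjoint V) ^ p)) (((adjoint W) ^ q) f))
          = ((adjoint V * (1 - V * adjoint V)) * (adjoint V) ^ p) (((adjoint W) ^ q) f) := by
        simp only [ContinuousLinearMap.mul_apply]
      rw [ContinuousLinearMap.coe_coe, h2, sloc_ann V hV, zero_mul, zero_apply]
    · have hcm : (W ^ q : H →L[ℂ] H) * ((1 - V * adjoint V) * (adjoint V) ^ p)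
          = ((1 - V * adjoint V) * (adjoint V) ^ p) * W ^ q :=
        ((cRW.symm.pow_left q).mul_right ((cAW.symm).pow_pow q p)).eq
      calc (W ^ q : H →L[ℂ] H) (((1 - V * adjoint V) * (adjoint V) ^ p) (((adjoint W) ^ q) f))
          = ((W ^ q * ((1 - V * adjoint V) * (adjoint V) ^ p)) : H →L[ℂ] H)
              (((adjoint W) ^ q) f) := by simp only [ContinuousLinearMap.mul_apply]
        _ = ((((1 - V * adjoint V) * (adjoint V) ^ p) * W ^ q) : H →L[ℂ] H)
              (((adjoint W) ^ q) f) := by rw [hcm]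
        _ = ((1 - V * adjoint V) * (adjoint V) ^ p) ((W ^ q * (adjoint W) ^ q) f) := by
              simp only [ContinuousLinearMap.mul_apply]
        _ = ((1 - V * adjoint V) * (adjoint V) ^ p) f := by rw [hf q]
  · calc (V ^ p : H →L[ℂ] H) (((1 - V * adjoint V) * (adjoint V) ^ p) f)
        = (V ^ p * ((1 - V * adjoint V) * (adjoint V) ^ p)) f := by simp only [ContinuousLinearMap.mul_apply]
      _ = (V ^ p * (adjoint V) ^ p) f - (V ^ (p+1) * (adjoint V) ^ (p+1)) f := by
          rw [← sloc_D_eq V p, sub_apply]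

lemma sloc_DD_mem (V W : H →L[ℂ] H) (hV : adjoint V * V = 1) (hW : adjoint W * W = 1)
    (cVW : Commute V W) (cVB : Commute V (adjoint W))
    (cAW : Commute (adjoint V) W) (cAB : Commute (adjoint V) (adjoint W))
    (x : H) (p q : ℕ) :
    ((V ^ p * (adjoint V) ^ p - V ^ (p+1) * (adjoint V) ^ (p+1))
      * (W ^ q * (adjoint W) ^ q - W ^ (q+1) * (adjoint W) ^ (q+1))) x
    ∈ (LinearMap.ker ((adjoint V : H →L[ℂ] H) : H →ₗ[ℂ] H) ⊓ LinearMap.ker ((adjoint W : H →L[ℂ] H) : H →ₗ[ℂ] H)).map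
        ((V ^ p * W ^ q : H →L[ℂ] H) : H →ₗ[ℂ] H) := by
  have cRW : Commute (1 - V * adjoint V) W := (Commute.one_left W).sub_left (cVW.mul_left cAW)
  have cRB : Commute (1 - V * adjoint V) (adjoint W) :=
    (Commute.one_left _).sub_left (cVB.mul_left cAB)
  have hop : (V ^ p * (adjoint V) ^ p - V ^ (p+1) * (adjoint V) ^ (p+1))
      * (W ^ q * (adjoint W) ^ q - W ^ (q+1) * (adjoint W) ^ (q+1))
      = (V ^ p * W ^ q) * (((1 - V * adjoint V) * (adjoint V) ^ p)
          * ((1 - W * adjoint W) * (adjoint W) ^ q)) := by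
    rw [sloc_D_eq V p, sloc_D_eq W q]
    exact ((cRW.pow_right q).mul_left (cAW.pow_pow p q)).mul_mul_mul_comm _ _
  rw [hop, ContinuousLinearMap.mul_apply]
  refine Submodule.mem_map.mpr ⟨_, Submodule.mem_inf.mpr ⟨?_, ?_⟩, rfl⟩
  · rw [LinearMap.mem_ker]
    have h2 : adjoint V ((((1 - V * adjoint V) * (adjoint V) ^ p)
          * ((1 - W * adjoint W) * (adjoint W) ^ q)) x)
        = (((adjoint V * (1 - V * adjoint V)) * (adjoint V) ^ p)
          * ((1 - W * adjoint W) * (adjoint W) ^ q)) x := by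
      simp only [ContinuousLinearMap.mul_apply]
    rw [ContinuousLinearMap.coe_coe, h2, sloc_ann V hV, zero_mul, zero_mul, zero_apply]
  · rw [LinearMap.mem_ker]
    have hcm : (adjoint W) * ((1 - V * adjoint V) * (adjoint V) ^ p)
        = ((1 - V * adjoint V) * (adjoint V) ^ p) * adjoint W :=
      ((cRB.symm).mul_right ((cAB.symm).pow_right p)).eq
    have h2 : adjoint W ((((1 - V * adjoint V) * (adjoint V) ^ p)
          * ((1 - W * adjoint W) * (adjoint W) ^ q)) x)
        = ((((1 - V * adjoint V) * (adjoint V) ^ p)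
            * ((adjoint W * (1 - W * adjoint W)) * (adjoint W) ^ q))) x := by
      simp only [← ContinuousLinearMap.mul_apply]
      rw [← mul_assoc, hcm]
      simp only [mul_assoc]
    rw [ContinuousLinearMap.coe_coe, h2, sloc_ann W hW, zero_mul, mul_zero, zero_apply]

lemma sloc_fixed (S : H →L[ℂ] H) (u : ℕ → H) (y : H)
    (ht : Filter.Tendsto u Filter.atTop (nhds y))
    (h : ∀ᶠ n in Filter.atTop, S (u n) = u n) : S y = y :=
  tendsto_nhds_unique (Filter.Tendsto.congr' h ((S.continuous.tendsto y).comp ht)) ht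

lemma sloc_lim_transfer (u v : ℕ → H) (y : H) (hu : Filter.Tendsto u Filter.atTop (nhds y))
    (hb : Filter.Tendsto (fun n => ‖v n - u n‖) Filter.atTop (nhds 0)) :
    Filter.Tendsto v Filter.atTop (nhds y) := by
  have h1 : Filter.Tendsto (fun n => v n - u n) Filter.atTop (nhds 0) :=
    tendsto_zero_iff_norm_tendsto_zero.mpr hb
  have h2 := h1.add hu
  simpa using h2

lemma sloc_orth_closure {x : H} {K : Submodule ℂ H} (h : ∀ y ∈ K, (inner ℂ x y : ℂ) = 0) :
    ∀ y ∈ K.topologicalClosure, (inner ℂ x y : ℂ) = 0 := by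
  intro y hy
  have hle : K ≤ LinearMap.ker ((innerSL ℂ x : H →L[ℂ] ℂ) : H →ₗ[ℂ] ℂ) := fun z hz => by
    exact LinearMap.mem_ker.mpr (by rw [ContinuousLinearMap.coe_coe, innerSL_apply_apply]; exact h z hz)
  have h2 := Submodule.topologicalClosure_minimal K hle (ContinuousLinearMap.isClosed_ker _)
  have h3 := LinearMap.mem_ker.mp (h2 hy)
  rwa [ContinuousLinearMap.coe_coe, innerSL_apply_apply] at h3

lemma sloc_orth1 (V : H →L[ℂ] H) (hV : adjoint V * V = 1) (u m : H)
    (hm : adjoint V m = 0) (p : ℕ) :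
    (inner ℂ ((V ^ (p+1)) u) ((V ^ p) m) : ℂ) = 0 := by
  have h1 : (inner ℂ ((V ^ (p+1)) u) ((V ^ p) m) : ℂ)
      = inner ℂ u ((adjoint (V ^ (p+1))) ((V ^ p) m)) := (adjoint_inner_right _ _ _).symm
  rw [h1, sloc_adj_pow]
  have h2 : ((adjoint V) ^ (p+1)) ((V ^ p) m) = adjoint V m := by
    rw [← ContinuousLinearMap.mul_apply, sloc_pow_ge hV (Nat.le_succ p), Nat.succ_sub (le_refl p), Nat.sub_self,
      pow_one]
  rw [h2, hm, inner_zero_right]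

lemma sloc_orth3 (V W : H →L[ℂ] H) (hV : adjoint V * V = 1) (hW : adjoint W * W = 1)
    (cVW : Commute V W) (cVB : Commute V (adjoint W))
    (cAW : Commute (adjoint V) W) (cAB : Commute (adjoint V) (adjoint W))
    (u k : H) (hk : adjoint V k = 0) (p q : ℕ) :
    (inner ℂ ((V ^ (p+1) * W ^ q) u) ((V ^ p * W ^ q) k) : ℂ) = 0 := by
  have h1 : (inner ℂ ((V ^ (p+1) * W ^ q) u) ((V ^ p * W ^ q) k) : ℂ)
      = inner ℂ u ((adjoint (V ^ (p+1) * W ^ q)) ((V ^ p * W ^ q) k)) :=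
    (adjoint_inner_right _ _ _).symm
  have hadj : adjoint (V ^ (p+1) * W ^ q) = (adjoint W) ^ q * (adjoint V) ^ (p+1) := by
    rw [← star_eq_adjoint, star_mul, star_pow, star_pow]; rfl
  have hop : ((adjoint W) ^ q * (adjoint V) ^ (p+1)) * (V ^ p * W ^ q) = adjoint V := by
    rw [((cAB.symm).pow_pow q (p+1)).eq, Commute.mul_mul_mul_comm ((cVB.symm).pow_pow q p) _ _,
      sloc_pow_cancel hW, sloc_pow_ge hV (Nat.le_succ p), Nat.succ_sub (le_refl p),
      Nat.sub_self, pow_one, mul_one]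
  rw [h1, hadj, ← ContinuousLinearMap.mul_apply, hop, hk, inner_zero_right]

lemma sloc_orth4 (V W : H →L[ℂ] H) (hV : adjoint V * V = 1) (hW : adjoint W * W = 1)
    (cVW : Commute V W) (cVB : Commute V (adjoint W))
    (cAW : Commute (adjoint V) W) (cAB : Commute (adjoint V) (adjoint W))
    (a b : H) (ha : adjoint V a = 0) (p q : ℕ) :
    (inner ℂ ((V ^ p) ((W ^ q) a)) ((W ^ q) ((V ^ (p+1)) b)) : ℂ) = 0 := by
  have h0 : (V ^ p) ((W ^ q) a) = (V ^ p * W ^ q) a := by rw [ContinuousLinearMap.mul_apply]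
  have h0' : (W ^ q) ((V ^ (p+1)) b) = (W ^ q * V ^ (p+1)) b := by rw [ContinuousLinearMap.mul_apply]
  have h1 : (inner ℂ ((V ^ p * W ^ q) a) ((W ^ q * V ^ (p+1)) b) : ℂ)
      = inner ℂ a ((adjoint (V ^ p * W ^ q)) ((W ^ q * V ^ (p+1)) b)) :=
    (adjoint_inner_right _ _ _).symm
  have hadj : adjoint (V ^ p * W ^ q) = (adjoint W) ^ q * (adjoint V) ^ p := by
    rw [← star_eq_adjoint, star_mul, star_pow, star_pow]; rfl
  have hop : ((adjoint W) ^ q * (adjoint V) ^ p) * (W ^ q * V ^ (p+1)) = V := by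
    rw [Commute.mul_mul_mul_comm (cAW.pow_pow p q) _ _, sloc_pow_cancel hW,
      sloc_pow_le hV (Nat.le_succ p), Nat.succ_sub (le_refl p), Nat.sub_self, pow_one, one_mul]
  have h2 : (inner ℂ a (V b) : ℂ) = inner ℂ (adjoint V a) b := by
    conv_lhs => rw [show V = adjoint (adjoint V) by rw [adjoint_adjoint]]
    exact adjoint_inner_right _ _ _
  rw [h0, h0', h1, hadj, ← ContinuousLinearMap.mul_apply, hop, h2, ha, inner_zero_left]

lemma sloc_orth5 (V W : H →L[ℂ] H) (hV : adjoint V * V = 1) (hW : adjoint W * W = 1)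
    (cVW : Commute V W) (cVB : Commute V (adjoint W))
    (cAW : Commute (adjoint V) W) (cAB : Commute (adjoint V) (adjoint W))
    (a k : H) (hk : adjoint W k = 0) (p p' q' : ℕ) :
    (inner ℂ ((V ^ p) ((W ^ (q'+1)) a)) ((V ^ p' * W ^ q') k) : ℂ) = 0 := by
  have h0 : (V ^ p) ((W ^ (q'+1)) a) = (V ^ p * W ^ (q'+1)) a := by rw [ContinuousLinearMap.mul_apply]
  have h1 : (inner ℂ ((V ^ p * W ^ (q'+1)) a) ((V ^ p' * W ^ q') k) : ℂ)
      = inner ℂ a ((adjoint (V ^ p * W ^ (q'+1))) ((V ^ p' * W ^ q') k)) :=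
    (adjoint_inner_right _ _ _).symm
  have hadj : adjoint (V ^ p * W ^ (q'+1)) = (adjoint W) ^ (q'+1) * (adjoint V) ^ p := by
    rw [← star_eq_adjoint, star_mul, star_pow, star_pow]; rfl
  have hop : ((adjoint W) ^ (q'+1) * (adjoint V) ^ p) * (V ^ p' * W ^ q')
      = ((adjoint V) ^ p * V ^ p') * adjoint W := by
    rw [((cAB.symm).pow_pow (q'+1) p).eq,
      Commute.mul_mul_mul_comm ((cVB.symm).pow_pow (q'+1) p') _ _,
      sloc_pow_ge hW (Nat.le_succ q'), Nat.succ_sub (le_refl q'), Nat.sub_self, pow_one]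
  rw [h0, h1, hadj, ← ContinuousLinearMap.mul_apply, hop]
  rw [ContinuousLinearMap.mul_apply, hk, map_zero, inner_zero_right]

end MainAux

set_option maxHeartbeats 1000000 in
open Filter Topology in
/-- Słociński's theorem: for a double commuting pair of isometries `V₁, V₂` on a Hilbert
space `H`, the space decomposes as the orthogonal direct sum
`H = H_∅ ⊕ H₁ ⊕ H₂ ⊕ H₁₂` where
`H_∅ = ⋂_{p,q} V₁^p V₂^q H`, `H₁₂ = ⊕_{p,q} V₁^p V₂^q (ker V₁* ∩ ker V₂*)`,
`H₁ = ⊕_p V₁^p (⋂_q V₂^q ker V₁*)`, and `H₂ = ⊕_q V₂^q (⋂_p V₁^p ker V₂*)`. -/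
theorem stmt_8 (H : Type*) [NormedAddCommGroup H] [InnerProductSpace ℂ H] [CompleteSpace H]
    (V₁ V₂ : H →L[ℂ] H) (h1 : ∀ x, ‖V₁ x‖ = ‖x‖) (h2 : ∀ x, ‖V₂ x‖ = ‖x‖)
    (hcomm : V₁ * V₂ = V₂ * V₁)
    (hcomm' : V₁ * adjoint V₂ = adjoint V₂ * V₁) :
    let K₁ : Submodule ℂ H := LinearMap.ker ((adjoint V₁ : H →L[ℂ] H) : H →ₗ[ℂ] H)
    let K₂ : Submodule ℂ H := LinearMap.ker ((adjoint V₂ : H →L[ℂ] H) : H →ₗ[ℂ] H)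
    let He : Submodule ℂ H :=
      ⨅ p : ℕ, ⨅ q : ℕ, LinearMap.range ((V₁ ^ p * V₂ ^ q : H →L[ℂ] H) : H →ₗ[ℂ] H)
    let H₁₂ : Submodule ℂ H :=
      (⨆ p : ℕ, ⨆ q : ℕ, (K₁ ⊓ K₂).map ((V₁ ^ p * V₂ ^ q : H →L[ℂ] H) : H →ₗ[ℂ] H)).topologicalClosure
    let H₁ : Submodule ℂ H :=
      (⨆ p : ℕ,
        (⨅ q : ℕ, K₁.map ((V₂ ^ q : H →L[ℂ] H) : H →ₗ[ℂ] H)).map ((V₁ ^ p : H →L[ℂ] H) : H →ₗ[ℂ] H)).topologicalClosure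
    let H₂ : Submodule ℂ H :=
      (⨆ q : ℕ,
        (⨅ p : ℕ, K₂.map ((V₁ ^ p : H →L[ℂ] H) : H →ₗ[ℂ] H)).map ((V₂ ^ q : H →L[ℂ] H) : H →ₗ[ℂ] H)).topologicalClosure
    (He ⊔ H₁ ⊔ H₂ ⊔ H₁₂ = ⊤) ∧
    (∀ x ∈ He, ∀ y ∈ H₁, (inner ℂ x y : ℂ) = 0) ∧
    (∀ x ∈ He, ∀ y ∈ H₂, (inner ℂ x y : ℂ) = 0) ∧
    (∀ x ∈ He, ∀ y ∈ H₁₂, (inner ℂ x y : ℂ) = 0) ∧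
    (∀ x ∈ H₁, ∀ y ∈ H₂, (inner ℂ x y : ℂ) = 0) ∧
    (∀ x ∈ H₁, ∀ y ∈ H₁₂, (inner ℂ x y : ℂ) = 0) ∧
    (∀ x ∈ H₂, ∀ y ∈ H₁₂, (inner ℂ x y : ℂ) = 0) := by
  intro K₁ K₂ He H₁₂ H₁ H₂
  have hK₁ : K₁ = LinearMap.ker ((adjoint V₁ : H →L[ℂ] H) : H →ₗ[ℂ] H) := rfl
  have hK₂ : K₂ = LinearMap.ker ((adjoint V₂ : H →L[ℂ] H) : H →ₗ[ℂ] H) := rfl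
  have hHe : He = ⨅ p : ℕ, ⨅ q : ℕ,
      LinearMap.range ((V₁ ^ p * V₂ ^ q : H →L[ℂ] H) : H →ₗ[ℂ] H) := rfl
  have hH₁₂ : H₁₂ = (⨆ p : ℕ, ⨆ q : ℕ,
      (K₁ ⊓ K₂).map ((V₁ ^ p * V₂ ^ q : H →L[ℂ] H) : H →ₗ[ℂ] H)).topologicalClosure := rfl
  have hH₁ : H₁ = (⨆ p : ℕ, (⨅ q : ℕ,
      K₁.map ((V₂ ^ q : H →L[ℂ] H) : H →ₗ[ℂ] H)).map ((V₁ ^ p : H →L[ℂ] H) : H →ₗ[ℂ] H)).topologicalClosure := rfl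
  have hH₂ : H₂ = (⨆ q : ℕ, (⨅ p : ℕ,
      K₂.map ((V₁ ^ p : H →L[ℂ] H) : H →ₗ[ℂ] H)).map ((V₂ ^ q : H →L[ℂ] H) : H →ₗ[ℂ] H)).topologicalClosure := rfl
  clear_value K₁ K₂ He H₁₂ H₁ H₂
  have hV : adjoint V₁ * V₁ = 1 := sloc_isom V₁ h1
  have hW : adjoint V₂ * V₂ = 1 := sloc_isom V₂ h2
  have cVW : Commute V₁ V₂ := hcomm
  have cVB : Commute V₁ (adjoint V₂) := hcomm'
  have cAW : Commute (adjoint V₁) V₂ := by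
    have h := hcomm'
    rw [← star_eq_adjoint] at h
    have h2 := congrArg star h
    rw [star_mul, star_mul, star_star] at h2
    rw [← star_eq_adjoint]
    exact h2.symm
  have cAB : Commute (adjoint V₁) (adjoint V₂) := by
    have h2 := congrArg star hcomm
    rw [star_mul, star_mul] at h2
    rw [← star_eq_adjoint, ← star_eq_adjoint]
    exact h2.symm
  refine ⟨?_, ?_, ?_, ?_, ?_, ?_, ?_⟩
  · -- totality
    rw [eq_top_iff]
    intro x _
    obtain ⟨e, het⟩ := proj_tendsto (fun n => V₁ ^ n * (adjoint V₁) ^ n)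
      (fun m n => sloc_E_mul V₁ hV m n) (fun n => sloc_E_sa V₁ n)
      (fun n y => sloc_E_contr V₁ h1 n y) x
    obtain ⟨f, hft⟩ := proj_tendsto (fun n => V₂ ^ n * (adjoint V₂) ^ n)
      (fun m n => sloc_E_mul V₂ hW m n) (fun n => sloc_E_sa V₂ n)
      (fun n y => sloc_E_contr V₂ h2 n y) x
    obtain ⟨g, hgt⟩ := proj_tendsto
      (fun n => (V₁ ^ n * (adjoint V₁) ^ n) * (V₂ ^ n * (adjoint V₂) ^ n))
      (fun m n => sloc_T_mul V₁ V₂ hV hW cVW cVB cAW cAB m n)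
      (fun n => sloc_T_sa V₁ V₂ cVW cVB cAW cAB n)
      (fun n y => sloc_T_contr V₁ V₂ h1 h2 n y) x
    have hEe : ∀ p : ℕ, (V₁ ^ p * (adjoint V₁) ^ p) e = e := by
      intro p
      refine sloc_fixed _ _ _ het ?_
      filter_upwards [Filter.eventually_ge_atTop p] with n hn
      rw [← ContinuousLinearMap.mul_apply, sloc_E_mul V₁ hV, max_eq_right hn]
    have hFf : ∀ q : ℕ, (V₂ ^ q * (adjoint V₂) ^ q) f = f := by
      intro q
      refine sloc_fixed _ _ _ hft ?_
      filter_upwards [Filter.eventually_ge_atTop q] with n hn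
      rw [← ContinuousLinearMap.mul_apply, sloc_E_mul V₂ hW, max_eq_right hn]
    have hTg : ∀ p q : ℕ,
        ((V₁ ^ p * (adjoint V₁) ^ p) * (V₂ ^ q * (adjoint V₂) ^ q)) g = g := by
      intro p q
      refine sloc_fixed _ _ _ hgt ?_
      filter_upwards [Filter.eventually_ge_atTop (max p q)] with n hn
      rw [← ContinuousLinearMap.mul_apply,
        sloc_T_absorb V₁ V₂ hV hW cVW cVB cAW cAB
          (le_trans (le_max_left p q) hn) (le_trans (le_max_right p q) hn)]
    have hEf : Tendsto (fun n => (V₁ ^ n * (adjoint V₁) ^ n) f) atTop (𝓝 g) := by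
      refine sloc_lim_transfer _ _ _ hgt ?_
      have hb : ∀ n : ℕ, ‖(V₁ ^ n * (adjoint V₁) ^ n) f
          - ((V₁ ^ n * (adjoint V₁) ^ n) * (V₂ ^ n * (adjoint V₂) ^ n)) x‖
          ≤ ‖f - (V₂ ^ n * (adjoint V₂) ^ n) x‖ := by
        intro n
        rw [ContinuousLinearMap.mul_apply (V₁ ^ n * adjoint V₁ ^ n)
          (V₂ ^ n * adjoint V₂ ^ n) x, ← map_sub]
        exact sloc_E_contr V₁ h1 n _
      have h0 : Tendsto (fun n : ℕ => ‖f - (V₂ ^ n * (adjoint V₂) ^ n) x‖) atTop (𝓝 0) := by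
        have h3 := tendsto_const_nhds (x := f) (f := atTop (α := ℕ)) |>.sub hft
        rw [sub_self] at h3
        simpa using h3.norm
      exact squeeze_zero (fun n => norm_nonneg _) hb h0
    have hFe : Tendsto (fun n => (V₂ ^ n * (adjoint V₂) ^ n) e) atTop (𝓝 g) := by
      refine sloc_lim_transfer _ _ _ hgt ?_
      have hb : ∀ n : ℕ, ‖(V₂ ^ n * (adjoint V₂) ^ n) e
          - ((V₁ ^ n * (adjoint V₁) ^ n) * (V₂ ^ n * (adjoint V₂) ^ n)) x‖
          ≤ ‖e - (V₁ ^ n * (adjoint V₁) ^ n) x‖ := by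
        intro n
        rw [(sloc_EF_comm V₁ V₂ cVW cVB cAW cAB n n).eq,
          ContinuousLinearMap.mul_apply (V₂ ^ n * adjoint V₂ ^ n)
            (V₁ ^ n * adjoint V₁ ^ n) x, ← map_sub]
        exact sloc_E_contr V₂ h2 n _
      have h0 : Tendsto (fun n : ℕ => ‖e - (V₁ ^ n * (adjoint V₁) ^ n) x‖) atTop (𝓝 0) := by
        have h3 := tendsto_const_nhds (x := e) (f := atTop (α := ℕ)) |>.sub het
        rw [sub_self] at h3
        simpa using h3.norm
      exact squeeze_zero (fun n => norm_nonneg _) hb h0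
    have hg_mem : g ∈ He := by
      rw [hHe]
      rw [Submodule.mem_iInf]; intro p
      rw [Submodule.mem_iInf]; intro q
      refine LinearMap.mem_range.mpr ⟨((adjoint V₁) ^ p * (adjoint V₂) ^ q) g, ?_⟩
      rw [ContinuousLinearMap.coe_coe, ← ContinuousLinearMap.mul_apply, sloc_EF_factor V₁ V₂ cAW p q, hTg p q]
    have h1_mem : f - g ∈ H₁ := by
      rw [hH₁, hK₁]
      refine mem_closure_of_tendsto (tendsto_const_nhds.sub hEf)
        (Filter.Eventually.of_forall ?_)
      intro n
      have htel : f - (V₁ ^ n * (adjoint V₁) ^ n) f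
          = ∑ p ∈ Finset.range n, ((V₁ ^ p * (adjoint V₁) ^ p) f
              - (V₁ ^ (p+1) * (adjoint V₁) ^ (p+1)) f) := by
        rw [Finset.sum_range_sub' (fun p => (V₁ ^ p * (adjoint V₁) ^ p) f)]
        simp
      rw [htel]
      refine Submodule.sum_mem _ ?_
      intro p _
      exact Submodule.mem_iSup_of_mem p
        (sloc_D_mem V₁ V₂ hV cVW cVB cAW cAB f hFf p)
    have h2_mem : e - g ∈ H₂ := by
      rw [hH₂, hK₂]
      refine mem_closure_of_tendsto (tendsto_const_nhds.sub hFe)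
        (Filter.Eventually.of_forall ?_)
      intro n
      have htel : e - (V₂ ^ n * (adjoint V₂) ^ n) e
          = ∑ q ∈ Finset.range n, ((V₂ ^ q * (adjoint V₂) ^ q) e
              - (V₂ ^ (q+1) * (adjoint V₂) ^ (q+1)) e) := by
        rw [Finset.sum_range_sub' (fun q => (V₂ ^ q * (adjoint V₂) ^ q) e)]
        simp
      rw [htel]
      refine Submodule.sum_mem _ ?_
      intro q _
      exact Submodule.mem_iSup_of_mem q
        (sloc_D_mem V₂ V₁ hW cVW.symm cAW.symm cVB.symm cAB.symm e hEe q)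
    have h12_mem : x - f - e + g ∈ H₁₂ := by
      rw [hH₁₂, hK₁, hK₂]
      have htend : Tendsto (fun n => x - (V₂ ^ n * (adjoint V₂) ^ n) x
          - (V₁ ^ n * (adjoint V₁) ^ n) x
          + ((V₁ ^ n * (adjoint V₁) ^ n) * (V₂ ^ n * (adjoint V₂) ^ n)) x)
          atTop (𝓝 (x - f - e + g)) :=
        ((tendsto_const_nhds.sub hft).sub het).add hgt
      refine mem_closure_of_tendsto htend (Filter.Eventually.of_forall ?_)
      intro n
      have tel1 : ∀ z : H, z - (V₁ ^ n * (adjoint V₁) ^ n) z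
          = ∑ p ∈ Finset.range n, ((V₁ ^ p * (adjoint V₁) ^ p
              - V₁ ^ (p+1) * (adjoint V₁) ^ (p+1)) z) := by
        intro z
        simp only [ContinuousLinearMap.sub_apply]
        rw [Finset.sum_range_sub' (fun p => (V₁ ^ p * (adjoint V₁) ^ p) z)]
        simp
      have tel2 : ∀ z : H, z - (V₂ ^ n * (adjoint V₂) ^ n) z
          = ∑ q ∈ Finset.range n, ((V₂ ^ q * (adjoint V₂) ^ q
              - V₂ ^ (q+1) * (adjoint V₂) ^ (q+1)) z) := by
        intro z
        simp only [ContinuousLinearMap.sub_apply]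
        rw [Finset.sum_range_sub' (fun q => (V₂ ^ q * (adjoint V₂) ^ q) z)]
        simp
      have e1 : x - (V₂ ^ n * (adjoint V₂) ^ n) x - (V₁ ^ n * (adjoint V₁) ^ n) x
          + ((V₁ ^ n * (adjoint V₁) ^ n) * (V₂ ^ n * (adjoint V₂) ^ n)) x
          = ∑ p ∈ Finset.range n, ∑ q ∈ Finset.range n,
              ((V₁ ^ p * (adjoint V₁) ^ p - V₁ ^ (p+1) * (adjoint V₁) ^ (p+1))
                * (V₂ ^ q * (adjoint V₂) ^ q - V₂ ^ (q+1) * (adjoint V₂) ^ (q+1))) x := by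
        calc x - (V₂ ^ n * (adjoint V₂) ^ n) x - (V₁ ^ n * (adjoint V₁) ^ n) x
            + ((V₁ ^ n * (adjoint V₁) ^ n) * (V₂ ^ n * (adjoint V₂) ^ n)) x
            = (x - (V₂ ^ n * (adjoint V₂) ^ n) x)
              - (V₁ ^ n * (adjoint V₁) ^ n) (x - (V₂ ^ n * (adjoint V₂) ^ n) x) := by
              rw [map_sub, ContinuousLinearMap.mul_apply]; abel
          _ = ∑ p ∈ Finset.range n, ((V₁ ^ p * (adjoint V₁) ^ p
                - V₁ ^ (p+1) * (adjoint V₁) ^ (p+1)) (x - (V₂ ^ n * (adjoint V₂) ^ n) x)) :=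
              tel1 _
          _ = ∑ p ∈ Finset.range n, ((V₁ ^ p * (adjoint V₁) ^ p
                - V₁ ^ (p+1) * (adjoint V₁) ^ (p+1))
                  (∑ q ∈ Finset.range n, ((V₂ ^ q * (adjoint V₂) ^ q
                    - V₂ ^ (q+1) * (adjoint V₂) ^ (q+1)) x))) := by rw [← tel2 x]
          _ = ∑ p ∈ Finset.range n, ∑ q ∈ Finset.range n,
                ((V₁ ^ p * (adjoint V₁) ^ p - V₁ ^ (p+1) * (adjoint V₁) ^ (p+1))
                  * (V₂ ^ q * (adjoint V₂) ^ q - V₂ ^ (q+1) * (adjoint V₂) ^ (q+1))) x := by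
              refine Finset.sum_congr rfl (fun p _ => ?_)
              rw [map_sum]
              exact Finset.sum_congr rfl
                (fun q _ => (ContinuousLinearMap.mul_apply _ _ _).symm)
      rw [e1]
      refine Submodule.sum_mem _ ?_
      intro p _
      refine Submodule.sum_mem _ ?_
      intro q _
      exact Submodule.mem_iSup_of_mem p (Submodule.mem_iSup_of_mem q
        (sloc_DD_mem V₁ V₂ hV hW cVW cVB cAW cAB x p q))
    have hx : x = g + (f - g) + ((e - g) + (x - f - e + g)) := by abel
    rw [hx]
    refine Submodule.add_mem _ (Submodule.add_mem _ ?_ ?_) (Submodule.add_mem _ ?_ ?_)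
    · exact Submodule.mem_sup_left (Submodule.mem_sup_left (Submodule.mem_sup_left hg_mem))
    · exact Submodule.mem_sup_left (Submodule.mem_sup_left (Submodule.mem_sup_right h1_mem))
    · exact Submodule.mem_sup_left (Submodule.mem_sup_right h2_mem)
    · exact Submodule.mem_sup_right h12_mem
  · -- He ⊥ H₁
    intro x hx y hy
    rw [hHe] at hx
    rw [hH₁] at hy
    refine sloc_orth_closure ?_ y hy
    intro z hz
    refine Submodule.iSup_induction _ (motive := fun z => (inner ℂ x z : ℂ) = 0) hz ?_ ?_ ?_
    · intro p m hm
      obtain ⟨m₀, hm₀, rfl⟩ := Submodule.mem_map.mp hm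
      have hm₀' : adjoint V₁ m₀ = 0 := by
        obtain ⟨k, hk, hkm⟩ := Submodule.mem_map.mp ((Submodule.mem_iInf _).mp hm₀ 0)
        rw [hK₁, LinearMap.mem_ker] at hk
        rw [← hkm]
        simpa using hk
      obtain ⟨u, hu⟩ := LinearMap.mem_range.mp
        ((Submodule.mem_iInf _).mp ((Submodule.mem_iInf _).mp hx (p+1)) 0)
      have hu' : (V₁ ^ (p+1)) u = x := by rw [← hu, ContinuousLinearMap.coe_coe, pow_zero, mul_one]
      rw [← hu']
      exact sloc_orth1 V₁ hV u m₀ hm₀' p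
    · exact inner_zero_right x
    · intro a b ha hb; rw [inner_add_right, ha, hb, add_zero]
  · -- He ⊥ H₂
    intro x hx y hy
    rw [hHe] at hx
    rw [hH₂] at hy
    refine sloc_orth_closure ?_ y hy
    intro z hz
    refine Submodule.iSup_induction _ (motive := fun z => (inner ℂ x z : ℂ) = 0) hz ?_ ?_ ?_
    · intro q m hm
      obtain ⟨m₀, hm₀, rfl⟩ := Submodule.mem_map.mp hm
      have hm₀' : adjoint V₂ m₀ = 0 := by
        obtain ⟨k, hk, hkm⟩ := Submodule.mem_map.mp ((Submodule.mem_iInf _).mp hm₀ 0)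
        rw [hK₂, LinearMap.mem_ker] at hk
        rw [← hkm]
        simpa using hk
      obtain ⟨u, hu⟩ := LinearMap.mem_range.mp
        ((Submodule.mem_iInf _).mp ((Submodule.mem_iInf _).mp hx 0) (q+1))
      have hu' : (V₂ ^ (q+1)) u = x := by rw [← hu, ContinuousLinearMap.coe_coe, pow_zero, one_mul]
      rw [← hu']
      exact sloc_orth1 V₂ hW u m₀ hm₀' q
    · exact inner_zero_right x
    · intro a b ha hb; rw [inner_add_right, ha, hb, add_zero]
  · -- He ⊥ H₁₂
    intro x hx y hy
    rw [hHe] at hx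
    rw [hH₁₂] at hy
    refine sloc_orth_closure ?_ y hy
    intro z hz
    refine Submodule.iSup_induction _ (motive := fun z => (inner ℂ x z : ℂ) = 0) hz ?_ ?_ ?_
    · intro p w hw
      refine Submodule.iSup_induction _ (motive := fun w => (inner ℂ x w : ℂ) = 0) hw ?_ ?_ ?_
      · intro q m hm
        obtain ⟨k, hk, rfl⟩ := Submodule.mem_map.mp hm
        rw [hK₁, hK₂] at hk
        obtain ⟨hk1, hk2⟩ := Submodule.mem_inf.mp hk
        rw [LinearMap.mem_ker] at hk1
        obtain ⟨u, hu⟩ := LinearMap.mem_range.mp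
          ((Submodule.mem_iInf _).mp ((Submodule.mem_iInf _).mp hx (p+1)) q)
        rw [← hu]
        exact sloc_orth3 V₁ V₂ hV hW cVW cVB cAW cAB u k hk1 p q
      · exact inner_zero_right x
      · intro a b ha hb; rw [inner_add_right, ha, hb, add_zero]
    · exact inner_zero_right x
    · intro a b ha hb; rw [inner_add_right, ha, hb, add_zero]
  · -- H₁ ⊥ H₂
    intro x hx y hy
    rw [hH₁] at hx
    rw [hH₂] at hy
    have core : ∀ a ∈ (⨆ p : ℕ, (⨅ q : ℕ,
        K₁.map ((V₂ ^ q : H →L[ℂ] H) : H →ₗ[ℂ] H)).map ((V₁ ^ p : H →L[ℂ] H) : H →ₗ[ℂ] H)),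
        ∀ b ∈ (⨆ q : ℕ, (⨅ p : ℕ,
        K₂.map ((V₁ ^ p : H →L[ℂ] H) : H →ₗ[ℂ] H)).map ((V₂ ^ q : H →L[ℂ] H) : H →ₗ[ℂ] H)),
        (inner ℂ a b : ℂ) = 0 := by
      intro a ha
      refine Submodule.iSup_induction _
        (motive := fun a => ∀ b ∈ (⨆ q : ℕ, (⨅ p : ℕ,
          K₂.map ((V₁ ^ p : H →L[ℂ] H) : H →ₗ[ℂ] H)).map ((V₂ ^ q : H →L[ℂ] H) : H →ₗ[ℂ] H)),
          (inner ℂ a b : ℂ) = 0) ha ?_ ?_ ?_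
      · intro p m hm b hb
        refine Submodule.iSup_induction _ (motive := fun b => (inner ℂ m b : ℂ) = 0) hb ?_ ?_ ?_
        · intro q m' hm'
          obtain ⟨m₀, hm₀, rfl⟩ := Submodule.mem_map.mp hm
          obtain ⟨m₀', hm₀', rfl⟩ := Submodule.mem_map.mp hm'
          obtain ⟨a₀, ha₀, hq⟩ := Submodule.mem_map.mp ((Submodule.mem_iInf _).mp hm₀ q)
          obtain ⟨b₀, hb₀, hp⟩ := Submodule.mem_map.mp ((Submodule.mem_iInf _).mp hm₀' (p+1))
          rw [hK₁, LinearMap.mem_ker] at ha₀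
          rw [← hq, ← hp]
          exact sloc_orth4 V₁ V₂ hV hW cVW cVB cAW cAB a₀ b₀ ha₀ p q
        · exact inner_zero_right m
        · intro c d hc hd; rw [inner_add_right, hc, hd, add_zero]
      · intro b hb; exact inner_zero_left b
      · intro c d hc hd b hb; rw [inner_add_left, hc b hb, hd b hb, add_zero]
    have step1 : ∀ a ∈ (⨆ p : ℕ, (⨅ q : ℕ,
        K₁.map ((V₂ ^ q : H →L[ℂ] H) : H →ₗ[ℂ] H)).map ((V₁ ^ p : H →L[ℂ] H) : H →ₗ[ℂ] H)),
        (inner ℂ a y : ℂ) = 0 := fun a ha => sloc_orth_closure (core a ha) y hy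
    have step2 : ∀ a ∈ (⨆ p : ℕ, (⨅ q : ℕ,
        K₁.map ((V₂ ^ q : H →L[ℂ] H) : H →ₗ[ℂ] H)).map ((V₁ ^ p : H →L[ℂ] H) : H →ₗ[ℂ] H)),
        (inner ℂ y a : ℂ) = 0 := fun a ha => inner_eq_zero_symm.mp (step1 a ha)
    exact inner_eq_zero_symm.mp (sloc_orth_closure step2 x hx)
  · -- H₁ ⊥ H₁₂
    intro x hx y hy
    rw [hH₁] at hx
    rw [hH₁₂] at hy
    have core : ∀ a ∈ (⨆ p : ℕ, (⨅ q : ℕ,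
        K₁.map ((V₂ ^ q : H →L[ℂ] H) : H →ₗ[ℂ] H)).map ((V₁ ^ p : H →L[ℂ] H) : H →ₗ[ℂ] H)),
        ∀ b ∈ (⨆ p : ℕ, ⨆ q : ℕ, (K₁ ⊓ K₂).map ((V₁ ^ p * V₂ ^ q : H →L[ℂ] H) : H →ₗ[ℂ] H)),
        (inner ℂ a b : ℂ) = 0 := by
      intro a ha
      refine Submodule.iSup_induction _
        (motive := fun a => ∀ b ∈ (⨆ p : ℕ, ⨆ q : ℕ,
          (K₁ ⊓ K₂).map ((V₁ ^ p * V₂ ^ q : H →L[ℂ] H) : H →ₗ[ℂ] H)), (inner ℂ a b : ℂ) = 0) ha ?_ ?_ ?_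
      · intro p m hm b hb
        refine Submodule.iSup_induction _ (motive := fun b => (inner ℂ m b : ℂ) = 0) hb ?_ ?_ ?_
        · intro p' w hw
          refine Submodule.iSup_induction _ (motive := fun w => (inner ℂ m w : ℂ) = 0) hw ?_ ?_ ?_
          · intro q' m' hm'
            obtain ⟨m₀, hm₀, rfl⟩ := Submodule.mem_map.mp hm
            obtain ⟨k, hk, rfl⟩ := Submodule.mem_map.mp hm'
            rw [hK₁, hK₂] at hk
            obtain ⟨hk1, hk2⟩ := Submodule.mem_inf.mp hk
            rw [LinearMap.mem_ker] at hk2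
            obtain ⟨a₀, ha₀, hq⟩ := Submodule.mem_map.mp ((Submodule.mem_iInf _).mp hm₀ (q'+1))
            rw [← hq]
            exact sloc_orth5 V₁ V₂ hV hW cVW cVB cAW cAB a₀ k hk2 p p' q'
          · exact inner_zero_right m
          · intro c d hc hd; rw [inner_add_right, hc, hd, add_zero]
        · exact inner_zero_right m
        · intro c d hc hd; rw [inner_add_right, hc, hd, add_zero]
      · intro b hb; exact inner_zero_left b
      · intro c d hc hd b hb; rw [inner_add_left, hc b hb, hd b hb, add_zero]
    have step1 : ∀ a ∈ (⨆ p : ℕ, (⨅ q : ℕ,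
        K₁.map ((V₂ ^ q : H →L[ℂ] H) : H →ₗ[ℂ] H)).map ((V₁ ^ p : H →L[ℂ] H) : H →ₗ[ℂ] H)),
        (inner ℂ a y : ℂ) = 0 := fun a ha => sloc_orth_closure (core a ha) y hy
    have step2 : ∀ a ∈ (⨆ p : ℕ, (⨅ q : ℕ,
        K₁.map ((V₂ ^ q : H →L[ℂ] H) : H →ₗ[ℂ] H)).map ((V₁ ^ p : H →L[ℂ] H) : H →ₗ[ℂ] H)),
        (inner ℂ y a : ℂ) = 0 := fun a ha => inner_eq_zero_symm.mp (step1 a ha)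
    exact inner_eq_zero_symm.mp (sloc_orth_closure step2 x hx)
  · -- H₂ ⊥ H₁₂
    intro x hx y hy
    rw [hH₂] at hx
    rw [hH₁₂] at hy
    have core : ∀ a ∈ (⨆ q : ℕ, (⨅ p : ℕ,
        K₂.map ((V₁ ^ p : H →L[ℂ] H) : H →ₗ[ℂ] H)).map ((V₂ ^ q : H →L[ℂ] H) : H →ₗ[ℂ] H)),
        ∀ b ∈ (⨆ p : ℕ, ⨆ q : ℕ, (K₁ ⊓ K₂).map ((V₁ ^ p * V₂ ^ q : H →L[ℂ] H) : H →ₗ[ℂ] H)),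
        (inner ℂ a b : ℂ) = 0 := by
      intro a ha
      refine Submodule.iSup_induction _
        (motive := fun a => ∀ b ∈ (⨆ p : ℕ, ⨆ q : ℕ,
          (K₁ ⊓ K₂).map ((V₁ ^ p * V₂ ^ q : H →L[ℂ] H) : H →ₗ[ℂ] H)), (inner ℂ a b : ℂ) = 0) ha ?_ ?_ ?_
      · intro q m hm b hb
        refine Submodule.iSup_induction _ (motive := fun b => (inner ℂ m b : ℂ) = 0) hb ?_ ?_ ?_
        · intro p' w hw
          refine Submodule.iSup_induction _ (motive := fun w => (inner ℂ m w : ℂ) = 0) hw ?_ ?_ ?_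
          · intro q' m' hm'
            obtain ⟨m₀, hm₀, rfl⟩ := Submodule.mem_map.mp hm
            obtain ⟨k, hk, rfl⟩ := Submodule.mem_map.mp hm'
            rw [hK₁, hK₂] at hk
            obtain ⟨hk1, hk2⟩ := Submodule.mem_inf.mp hk
            rw [LinearMap.mem_ker] at hk1
            obtain ⟨a₀, ha₀, hp⟩ := Submodule.mem_map.mp ((Submodule.mem_iInf _).mp hm₀ (p'+1))
            rw [← hp, (cVW.pow_pow p' q').eq]
            exact sloc_orth5 V₂ V₁ hW hV cVW.symm cAW.symm cVB.symm cAB.symm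
              a₀ k hk1 q q' p'
          · exact inner_zero_right m
          · intro c d hc hd; rw [inner_add_right, hc, hd, add_zero]
        · exact inner_zero_right m
        · intro c d hc hd; rw [inner_add_right, hc, hd, add_zero]
      · intro b hb; exact inner_zero_left b
      · intro c d hc hd b hb; rw [inner_add_left, hc b hb, hd b hb, add_zero]
    have step1 : ∀ a ∈ (⨆ q : ℕ, (⨅ p : ℕ,
        K₂.map ((V₁ ^ p : H →L[ℂ] H) : H →ₗ[ℂ] H)).map ((V₂ ^ q : H →L[ℂ] H) : H →ₗ[ℂ] H)),
        (inner ℂ a y : ℂ) = 0 := fun a ha => sloc_orth_closure (core a ha) y hy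
    have step2 : ∀ a ∈ (⨆ q : ℕ, (⨅ p : ℕ,
        K₂.map ((V₁ ^ p : H →L[ℂ] H) : H →ₗ[ℂ] H)).map ((V₂ ^ q : H →L[ℂ] H) : H →ₗ[ℂ] H)),
        (inner ℂ y a : ℂ) = 0 := fun a ha => inner_eq_zero_symm.mp (step1 a ha)
    exact inner_eq_zero_symm.mp (sloc_orth_closure step2 x hx)
end
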